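/- arXiv:1911.06195 — 7 statements merged into one kernel-verified Lean document; each statement's English description precedes it below -/
import Mathlib

section
/- Let u₁, u₂, a₁, a₂ : ℝ × ℝ² → ℝ be smooth, set D_t = ∂_t + u₁ ∂₁ + u₂ ∂₂, and assume the transport law ∂_t a_i + Σ_{j=1}^{2} u_j ∂_j a_i = Σ_{j=1}^{2} a_j ∂_j u_i holds on ℝ × ℝ² for i = 1,2. Then for every smooth g : ℝ × ℝ² → ℝ, the operators D_t and D_a = a₁ ∂₁ + a₂ ∂₂ commute: D_t(a₁ ∂₁ g + a₂ ∂₂ g) = a₁ ∂₁(D_t g) + a₂ ∂₂(D_t g) at every point of ℝ × ℝ². -/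
open scoped BigOperators

noncomputable section

/-! Partial derivatives of curried functions of several real variables. -/

/-- derivative in the 1st of 2 arguments -/
def d1_2 (g : ℝ → ℝ → ℝ) : ℝ → ℝ → ℝ := fun a b => deriv (fun s => g s b) a
/-- derivative in the 2nd of 2 arguments -/
def d2_2 (g : ℝ → ℝ → ℝ) : ℝ → ℝ → ℝ := fun a b => deriv (fun s => g a s) b

/-- derivative in the 1st of 3 arguments -/
def d1_3 (g : ℝ → ℝ → ℝ → ℝ) : ℝ → ℝ → ℝ → ℝ := fun a b c => deriv (fun s => g s b c) a
/-- derivative in the 2nd of 3 arguments -/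
def d2_3 (g : ℝ → ℝ → ℝ → ℝ) : ℝ → ℝ → ℝ → ℝ := fun a b c => deriv (fun s => g a s c) b
/-- derivative in the 3rd of 3 arguments -/
def d3_3 (g : ℝ → ℝ → ℝ → ℝ) : ℝ → ℝ → ℝ → ℝ := fun a b c => deriv (fun s => g a b s) c

/-- derivative in the 1st of 4 arguments -/
def d1_4 (g : ℝ → ℝ → ℝ → ℝ → ℝ) : ℝ → ℝ → ℝ → ℝ → ℝ := fun a b c e => deriv (fun s => g s b c e) a
/-- derivative in the 2nd of 4 arguments -/
def d2_4 (g : ℝ → ℝ → ℝ → ℝ → ℝ) : ℝ → ℝ → ℝ → ℝ → ℝ := fun a b c e => deriv (fun s => g a s c e) b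
/-- derivative in the 3rd of 4 arguments -/
def d3_4 (g : ℝ → ℝ → ℝ → ℝ → ℝ) : ℝ → ℝ → ℝ → ℝ → ℝ := fun a b c e => deriv (fun s => g a b s e) c
/-- derivative in the 4th of 4 arguments -/
def d4_4 (g : ℝ → ℝ → ℝ → ℝ → ℝ) : ℝ → ℝ → ℝ → ℝ → ℝ := fun a b c e => deriv (fun s => g a b c s) e

/-- spatial derivatives ∂₁, ∂₂, ∂₃ of v(t, x₁, x₂, x₃) -/
def dsp : Fin 3 → (ℝ → ℝ → ℝ → ℝ → ℝ) → (ℝ → ℝ → ℝ → ℝ → ℝ) := ![d2_4, d3_4, d4_4]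
/-- tangential derivatives ∂₁, ∂₂ of g(t, x₁, x₂) -/
def dtg : Fin 2 → (ℝ → ℝ → ℝ → ℝ) → (ℝ → ℝ → ℝ → ℝ) := ![d2_3, d3_3]
/-- spatial derivatives ∂₁, ∂₂, ∂₃ of v(x₁, x₂, x₃) -/
def dsp3 : Fin 3 → (ℝ → ℝ → ℝ → ℝ) → (ℝ → ℝ → ℝ → ℝ) := ![d1_3, d2_3, d3_3]
/-- derivatives ∂₁, ∂₂ of g(x₁, x₂) -/
def dtg2 : Fin 2 → (ℝ → ℝ → ℝ) → (ℝ → ℝ → ℝ) := ![d1_2, d2_2]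

/-- C^∞ smoothness for a function of 2 real variables -/
def smooth2 (g : ℝ → ℝ → ℝ) : Prop :=
  ContDiff ℝ (⊤ : ℕ∞) (fun p : ℝ × ℝ => g p.1 p.2)
/-- C^∞ smoothness for a function of 3 real variables -/
def smooth3 (g : ℝ → ℝ → ℝ → ℝ) : Prop :=
  ContDiff ℝ (⊤ : ℕ∞) (fun p : ℝ × ℝ × ℝ => g p.1 p.2.1 p.2.2)
/-- C^∞ smoothness for a function of 4 real variables -/
def smooth4 (g : ℝ → ℝ → ℝ → ℝ → ℝ) : Prop :=
  ContDiff ℝ (⊤ : ℕ∞) (fun p : ℝ × ℝ × ℝ × ℝ => g p.1 p.2.1 p.2.2.1 p.2.2.2)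

/-- trace of v(t,x₁,x₂,x₃) on the graph x₃ = f(t,x₁,x₂) -/
def tr (v : ℝ → ℝ → ℝ → ℝ → ℝ) (f : ℝ → ℝ → ℝ → ℝ) : ℝ → ℝ → ℝ → ℝ :=
  fun t x y => v t x y (f t x y)
/-- trace of v(x₁,x₂,x₃) on the graph x₃ = f(x₁,x₂) -/
def tr2 (v : ℝ → ℝ → ℝ → ℝ) (f : ℝ → ℝ → ℝ) : ℝ → ℝ → ℝ :=
  fun x y => v x y (f x y)

/-- the (non-normalized) outward normal N_f = (−∂₁f, −∂₂f, 1) of the graph of f(t,·) -/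
def Nf (f : ℝ → ℝ → ℝ → ℝ) : Fin 3 → ℝ → ℝ → ℝ → ℝ :=
  ![fun t x y => -(d2_3 f t x y), fun t x y => -(d3_3 f t x y), fun _ _ _ => 1]
/-- the (non-normalized) outward normal of the graph of a time-independent f -/
def Nf2 (f : ℝ → ℝ → ℝ) : Fin 3 → ℝ → ℝ → ℝ :=
  ![fun x y => -(d1_2 f x y), fun x y => -(d2_2 f x y), fun _ _ => 1]

/-- the interface material derivative D_t g = ∂_t g + u̲₁ ∂₁ g + u̲₂ ∂₂ g -/
def Dt (u : Fin 3 → ℝ → ℝ → ℝ → ℝ → ℝ) (f : ℝ → ℝ → ℝ → ℝ)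
    (g : ℝ → ℝ → ℝ → ℝ) : ℝ → ℝ → ℝ → ℝ :=
  fun t x y => d1_3 g t x y + tr (u 0) f t x y * d2_3 g t x y + tr (u 1) f t x y * d3_3 g t x y

/-- the material derivative D_t g = ∂_t g + u₁ ∂₁ g + u₂ ∂₂ g for given coefficients u₁,u₂ on ℝ×ℝ² -/
def Dt2 (u : Fin 2 → ℝ → ℝ → ℝ → ℝ) (g : ℝ → ℝ → ℝ → ℝ) : ℝ → ℝ → ℝ → ℝ :=
  fun t x y => d1_3 g t x y + u 0 t x y * d2_3 g t x y + u 1 t x y * d3_3 g t x y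

/-- the tangential deformation derivative D_{F_k} g = F̲₁ₖ ∂₁ g + F̲₂ₖ ∂₂ g -/
def DF (F : Fin 3 → Fin 3 → ℝ → ℝ → ℝ → ℝ → ℝ) (f : ℝ → ℝ → ℝ → ℝ) (k : Fin 3)
    (g : ℝ → ℝ → ℝ → ℝ) : ℝ → ℝ → ℝ → ℝ :=
  fun t x y => tr (F 0 k) f t x y * d2_3 g t x y + tr (F 1 k) f t x y * d3_3 g t x y

/-- the full material derivative D_t g = ∂_t g + Σ u_m ∂_m g on ℝ×ℝ³ -/
def Dt4 (u : Fin 3 → ℝ → ℝ → ℝ → ℝ → ℝ) (g : ℝ → ℝ → ℝ → ℝ → ℝ) : ℝ → ℝ → ℝ → ℝ → ℝ :=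
  fun t x y z => d1_4 g t x y z + ∑ m : Fin 3, u m t x y z * dsp m g t x y z

/-- the spatial Laplacian on ℝ×ℝ³ -/
def lap4 (g : ℝ → ℝ → ℝ → ℝ → ℝ) : ℝ → ℝ → ℝ → ℝ → ℝ :=
  fun t x y z => ∑ k : Fin 3, dsp k (dsp k g) t x y z

abbrev E3 := ℝ × ℝ × ℝ

lemma le1 : (1 : WithTop ℕ∞) ≤ ((⊤:ℕ∞) : WithTop ℕ∞) := by exact_mod_cast (le_top : (1:ℕ∞) ≤ ⊤)
lemma le2 : (2 : WithTop ℕ∞) ≤ ((⊤:ℕ∞) : WithTop ℕ∞) := by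
  have : ((2:ℕ∞) : WithTop ℕ∞) ≤ ((⊤:ℕ∞) : WithTop ℕ∞) := by exact_mod_cast (le_top : (2:ℕ∞) ≤ ⊤)
  simpa using this
lemma leS : ((⊤:ℕ∞) : WithTop ℕ∞) + 1 ≤ ((⊤:ℕ∞) : WithTop ℕ∞) := by
  exact_mod_cast (le_refl (⊤:ℕ∞))


def pd (v : E3) (G : E3 → ℝ) : E3 → ℝ := fun p => fderiv ℝ G p v

lemma pd_smooth {G : E3 → ℝ} (hG : ContDiff ℝ (⊤:ℕ∞) G) (v : E3) :
    ContDiff ℝ (⊤:ℕ∞) (pd v G) :=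
  (hG.fderiv_right leS).clm_apply contDiff_const

lemma pd_comm {G : E3 → ℝ} (hG : ContDiff ℝ (⊤:ℕ∞) G) (v w : E3) (p : E3) :
    pd v (pd w G) p = pd w (pd v G) p := by
  have hsym : IsSymmSndFDerivAt ℝ G p :=
    ContDiffAt.isSymmSndFDerivAt hG.contDiffAt (by simpa [minSmoothness_of_isRCLikeNormedField] using le2)
  have key : ∀ u w : E3, fderiv ℝ (fun q => fderiv ℝ G q w) p u
      = fderiv ℝ (fderiv ℝ G) p u w := by
    intro u w
    have hdiff : DifferentiableAt ℝ (fderiv ℝ G) p :=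
      ((hG.fderiv_right leS).differentiable (by simp)).differentiableAt
    rw [fderiv_clm_apply hdiff (differentiableAt_const w)]
    simp
  show fderiv ℝ (fun q => fderiv ℝ G q w) p v = fderiv ℝ (fun q => fderiv ℝ G q v) p w
  rw [key, key, hsym.eq]

lemma slice1 {G : E3 → ℝ} (hG : ContDiff ℝ (⊤:ℕ∞) G) (t x y : ℝ) :
    deriv (fun s => G (s, x, y)) t = pd (1,0,0) G (t,x,y) := by
  have h1 : HasDerivAt (fun s : ℝ => ((s, x, y) : E3)) (1,0,0) t :=
    (hasDerivAt_id t).prodMk (hasDerivAt_const _ _)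
  have h2 : HasFDerivAt G (fderiv ℝ G (t,x,y)) (t,x,y) :=
    ((hG.differentiable (by simp)) _).hasFDerivAt
  exact (h2.comp_hasDerivAt t h1).deriv

lemma slice2 {G : E3 → ℝ} (hG : ContDiff ℝ (⊤:ℕ∞) G) (t x y : ℝ) :
    deriv (fun s => G (t, s, y)) x = pd (0,1,0) G (t,x,y) := by
  have h1 : HasDerivAt (fun s : ℝ => ((t, s, y) : E3)) (0,1,0) x :=
    (hasDerivAt_const _ _).prodMk ((hasDerivAt_id x).prodMk (hasDerivAt_const _ _))
  have h2 : HasFDerivAt G (fderiv ℝ G (t,x,y)) (t,x,y) :=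
    ((hG.differentiable (by simp)) _).hasFDerivAt
  exact (h2.comp_hasDerivAt x h1).deriv

lemma slice3 {G : E3 → ℝ} (hG : ContDiff ℝ (⊤:ℕ∞) G) (t x y : ℝ) :
    deriv (fun s => G (t, x, s)) y = pd (0,0,1) G (t,x,y) := by
  have h1 : HasDerivAt (fun s : ℝ => ((t, x, s) : E3)) (0,0,1) y :=
    (hasDerivAt_const _ _).prodMk ((hasDerivAt_const _ _).prodMk (hasDerivAt_id y))
  have h2 : HasFDerivAt G (fderiv ℝ G (t,x,y)) (t,x,y) :=
    ((hG.differentiable (by simp)) _).hasFDerivAt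
  exact (h2.comp_hasDerivAt y h1).deriv

lemma pd_mul {A B : E3 → ℝ} (hA : ContDiff ℝ (⊤:ℕ∞) A) (hB : ContDiff ℝ (⊤:ℕ∞) B)
    (v p) : pd v (fun q => A q * B q) p = pd v A p * B p + A p * pd v B p := by
  show fderiv ℝ (fun q => A q * B q) p v = _
  rw [fderiv_fun_mul (hA.differentiable (by simp) _) (hB.differentiable (by simp) _)]
  show A p * fderiv ℝ B p v + B p * fderiv ℝ A p v = _
  ring_nf; rfl

lemma pd_add {A B : E3 → ℝ} (hA : ContDiff ℝ (⊤:ℕ∞) A) (hB : ContDiff ℝ (⊤:ℕ∞) B)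
    (v p) : pd v (fun q => A q + B q) p = pd v A p + pd v B p := by
  show fderiv ℝ (fun q => A q + B q) p v = _
  rw [fderiv_fun_add (hA.differentiable (by simp) _) (hB.differentiable (by simp) _)]
  rfl

lemma pd_expand2 {A0 B0 A1 B1 : E3 → ℝ} (hA0 : ContDiff ℝ (⊤:ℕ∞) A0)
    (hB0 : ContDiff ℝ (⊤:ℕ∞) B0) (hA1 : ContDiff ℝ (⊤:ℕ∞) A1)
    (hB1 : ContDiff ℝ (⊤:ℕ∞) B1) (v p) :
    pd v (fun q => A0 q * B0 q + A1 q * B1 q) p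
      = pd v A0 p * B0 p + A0 p * pd v B0 p + pd v A1 p * B1 p + A1 p * pd v B1 p := by
  rw [pd_add (hA0.mul hB0) (hA1.mul hB1), pd_mul hA0 hB0, pd_mul hA1 hB1]
  ring

lemma pd_expand3 {C A0 B0 A1 B1 : E3 → ℝ} (hC : ContDiff ℝ (⊤:ℕ∞) C)
    (hA0 : ContDiff ℝ (⊤:ℕ∞) A0) (hB0 : ContDiff ℝ (⊤:ℕ∞) B0)
    (hA1 : ContDiff ℝ (⊤:ℕ∞) A1) (hB1 : ContDiff ℝ (⊤:ℕ∞) B1) (v p) :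
    pd v (fun q => C q + A0 q * B0 q + A1 q * B1 q) p
      = pd v C p + pd v A0 p * B0 p + A0 p * pd v B0 p
        + pd v A1 p * B1 p + A1 p * pd v B1 p := by
  rw [pd_add (hC.add (hA0.mul hB0)) (hA1.mul hB1), pd_add hC (hA0.mul hB0),
    pd_mul hA0 hB0, pd_mul hA1 hB1]
  ring


/-- uncurrying -/
def un (g : ℝ → ℝ → ℝ → ℝ) : E3 → ℝ := fun p => g p.1 p.2.1 p.2.2

lemma d1_3_eq {g : ℝ → ℝ → ℝ → ℝ} (hg : smooth3 g) :
    d1_3 g = fun t x y => pd (1,0,0) (un g) (t,x,y) := by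
  funext t x y; exact slice1 hg t x y
lemma d2_3_eq {g : ℝ → ℝ → ℝ → ℝ} (hg : smooth3 g) :
    d2_3 g = fun t x y => pd (0,1,0) (un g) (t,x,y) := by
  funext t x y; exact slice2 hg t x y
lemma d3_3_eq {g : ℝ → ℝ → ℝ → ℝ} (hg : smooth3 g) :
    d3_3 g = fun t x y => pd (0,0,1) (un g) (t,x,y) := by
  funext t x y; exact slice3 hg t x y


/-- if ∂_t a_i + Σ_j u_j ∂_j a_i = Σ_j a_j ∂_j u_i, then D_t and D_a = a₁∂₁ + a₂∂₂
commute. -/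
theorem commutator_Dt_Da
    (u a : Fin 2 → ℝ → ℝ → ℝ → ℝ)
    (hu : ∀ j, smooth3 (u j)) (ha : ∀ j, smooth3 (a j))
    (htrans : ∀ i : Fin 2, ∀ t x y,
      d1_3 (a i) t x y + ∑ j : Fin 2, u j t x y * dtg j (a i) t x y
        = ∑ j : Fin 2, a j t x y * dtg j (u i) t x y) :
    ∀ g : ℝ → ℝ → ℝ → ℝ, smooth3 g → ∀ t x y,
      Dt2 u (fun t x y => ∑ j : Fin 2, a j t x y * dtg j g t x y) t x y
        = ∑ j : Fin 2, a j t x y * dtg j (Dt2 u g) t x y := by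
  intro g hg t x y
  have hG : ContDiff ℝ (⊤:ℕ∞) (un g) := hg
  have hA0 : ContDiff ℝ (⊤:ℕ∞) (un (a 0)) := ha 0
  have hA1 : ContDiff ℝ (⊤:ℕ∞) (un (a 1)) := ha 1
  have hU0 : ContDiff ℝ (⊤:ℕ∞) (un (u 0)) := hu 0
  have hU1 : ContDiff ℝ (⊤:ℕ∞) (un (u 1)) := hu 1
  -- transport equalities in pd form
  have ht0 := htrans 0 t x y
  have ht1 := htrans 1 t x y
  simp only [Fin.sum_univ_two, dtg, Matrix.cons_val_zero, Matrix.cons_val_one,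
    Matrix.head_cons, Dt2] at ht0 ht1 ⊢
  rw [d1_3_eq (ha 0), d2_3_eq (ha 0), d3_3_eq (ha 0), d2_3_eq (hu 0), d3_3_eq (hu 0)] at ht0
  rw [d1_3_eq (ha 1), d2_3_eq (ha 1), d3_3_eq (ha 1), d2_3_eq (hu 1), d3_3_eq (hu 1)] at ht1
  beta_reduce at ht0 ht1
  -- unfold the inner Dt2 and rewrite the inner d's of g
  have hDt2 : Dt2 u g = fun t x y =>
      d1_3 g t x y + u 0 t x y * d2_3 g t x y + u 1 t x y * d3_3 g t x y := rfl
  rw [hDt2, d1_3_eq hg, d2_3_eq hg, d3_3_eq hg]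
  -- the combined functions
  set G := un g with hGdef
  set A0 := un (a 0)
  set A1 := un (a 1)
  set U0 := un (u 0)
  set U1 := un (u 1)
  -- the source function S and velocity-extended function W
  have hSU : ContDiff ℝ (⊤:ℕ∞)
      (fun q : E3 => A0 q * pd (0,1,0) G q + A1 q * pd (0,0,1) G q) :=
    (hA0.mul (pd_smooth hG _)).add (hA1.mul (pd_smooth hG _))
  have hW : ContDiff ℝ (⊤:ℕ∞)
      (fun q : E3 => pd (1,0,0) G q + U0 q * pd (0,1,0) G q + U1 q * pd (0,0,1) G q) :=
    ((pd_smooth hG _).add (hU0.mul (pd_smooth hG _))).add (hU1.mul (pd_smooth hG _))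
  have h1 : d1_3 (fun t x y => a 0 t x y * pd (0,1,0) G (t,x,y) + a 1 t x y * pd (0,0,1) G (t,x,y)) t x y
      = pd (1,0,0) (fun q : E3 => A0 q * pd (0,1,0) G q + A1 q * pd (0,0,1) G q) (t,x,y) :=
    slice1 hSU t x y
  have h2 : d2_3 (fun t x y => a 0 t x y * pd (0,1,0) G (t,x,y) + a 1 t x y * pd (0,0,1) G (t,x,y)) t x y
      = pd (0,1,0) (fun q : E3 => A0 q * pd (0,1,0) G q + A1 q * pd (0,0,1) G q) (t,x,y) :=
    slice2 hSU t x y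
  have h3 : d3_3 (fun t x y => a 0 t x y * pd (0,1,0) G (t,x,y) + a 1 t x y * pd (0,0,1) G (t,x,y)) t x y
      = pd (0,0,1) (fun q : E3 => A0 q * pd (0,1,0) G q + A1 q * pd (0,0,1) G q) (t,x,y) :=
    slice3 hSU t x y
  have h4 : d2_3 (fun t x y => pd (1,0,0) G (t,x,y) + u 0 t x y * pd (0,1,0) G (t,x,y) + u 1 t x y * pd (0,0,1) G (t,x,y)) t x y
      = pd (0,1,0) (fun q : E3 => pd (1,0,0) G q + U0 q * pd (0,1,0) G q + U1 q * pd (0,0,1) G q) (t,x,y) :=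
    slice2 hW t x y
  have h5 : d3_3 (fun t x y => pd (1,0,0) G (t,x,y) + u 0 t x y * pd (0,1,0) G (t,x,y) + u 1 t x y * pd (0,0,1) G (t,x,y)) t x y
      = pd (0,0,1) (fun q : E3 => pd (1,0,0) G q + U0 q * pd (0,1,0) G q + U1 q * pd (0,0,1) G q) (t,x,y) :=
    slice3 hW t x y
  rw [h1, h2, h3, h4, h5]
  rw [pd_expand2 hA0 (pd_smooth hG _) hA1 (pd_smooth hG _),
      pd_expand2 hA0 (pd_smooth hG _) hA1 (pd_smooth hG _),
      pd_expand2 hA0 (pd_smooth hG _) hA1 (pd_smooth hG _),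
      pd_expand3 (pd_smooth hG _) hU0 (pd_smooth hG _) hU1 (pd_smooth hG _),
      pd_expand3 (pd_smooth hG _) hU0 (pd_smooth hG _) hU1 (pd_smooth hG _)]
  -- normalize mixed second derivatives
  rw [pd_comm hG (0,1,0) (1,0,0) (t,x,y), pd_comm hG (0,0,1) (1,0,0) (t,x,y),
      pd_comm hG (0,0,1) (0,1,0) (t,x,y)]
  -- pointwise values agree: a i t x y = A i (t,x,y), u i t x y = U i (t,x,y)
  have ea0 : a 0 t x y = A0 (t,x,y) := rfl
  have ea1 : a 1 t x y = A1 (t,x,y) := rfl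
  have eu0 : u 0 t x y = U0 (t,x,y) := rfl
  have eu1 : u 1 t x y = U1 (t,x,y) := rfl
  rw [ea0, ea1, eu0, eu1] at ht0 ht1 ⊢
  linear_combination pd (0,1,0) G (t,x,y) * ht0 + pd (0,0,1) G (t,x,y) * ht1
end
end

section
/- Let u₁, u₂, f : ℝ × ℝ² → ℝ be smooth and set D_t = ∂_t + u₁ ∂₁ + u₂ ∂₂. Then for i ∈ {1,2}, at every point of ℝ × ℝ²: D_t(D_t(∂_i f)) = ∂_i(D_t(D_t f)) − 2 Σ_{j=1}^{2} (∂_i u_j) D_t(∂_j f) − Σ_{j=1}^{2} (∂_i(D_t u_j)) (∂_j f). -/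
open scoped BigOperators

noncomputable section

/-! With `V = (1, u₁, u₂)` on `ℝ × ℝ²` we have `D_t G = dG(V)` and `∂_i G = dG(e_i)`, and by
symmetry of second derivatives `D_V ∂_w G = ∂_w D_V G - dG(∂_w V)`. Commuting `∂_w` past both
factors of `D_V D_V` and expanding the two correction terms by the chain rule gives, using the
symmetry of `d²G` and `d²V` once more,
`D_V D_V ∂_w G = ∂_w D_V D_V G - 2 D_V (∂_X G) - dG(∂_w (D_V V))` with `X = ∂_w V(p)` frozen at
the point. In coordinates `X = (0, ∂_w u₁, ∂_w u₂)` and `D_V V = (0, D_t u₁, D_t u₂)`, which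
gives the two sums. -/

section MaterialDerivative

variable {E F : Type*} [NormedAddCommGroup E] [NormedSpace ℝ E]
  [NormedAddCommGroup F] [NormedSpace ℝ F]

def materialDeriv (V : E → E) (G : E → F) (q : E) : F := fderiv ℝ G q (V q)

variable {V : E → E} {G : E → F} {p : E}

theorem ContDiff.materialDeriv {n : WithTop ℕ∞} (hG : ContDiff ℝ (n + 1) G)
    (hV : ContDiff ℝ n V) : ContDiff ℝ n (materialDeriv V G) :=
  (hG.fderiv_right le_rfl).clm_apply hV

theorem fderiv_materialDeriv_apply (hG : DifferentiableAt ℝ (fderiv ℝ G) p)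
    (hV : DifferentiableAt ℝ V p) (w : E) :
    fderiv ℝ (materialDeriv V G) p w
      = fderiv ℝ (fderiv ℝ G) p w (V p) + fderiv ℝ G p (fderiv ℝ V p w) := by
  unfold materialDeriv
  rw [fderiv_clm_apply hG hV]
  simp [add_comm]

theorem materialDeriv_fderiv_apply_eq_fderiv_fderiv (hG : DifferentiableAt ℝ (fderiv ℝ G) p)
    (w : E) :
    materialDeriv V (fderiv ℝ G · w) p = fderiv ℝ (fderiv ℝ G) p (V p) w :=
  (fderiv_materialDeriv_apply (V := fun _ => w) hG (differentiableAt_const w) (V p)).trans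
    (by simp)

theorem materialDeriv_sub {A B : E → F} (hA : DifferentiableAt ℝ A p)
    (hB : DifferentiableAt ℝ B p) :
    materialDeriv V (fun q => A q - B q) p = materialDeriv V A p - materialDeriv V B p := by
  simp [materialDeriv, fderiv_fun_sub hA hB]

theorem materialDeriv_fderiv_apply_comm (hG : ContDiffAt ℝ 2 G p) (hV : DifferentiableAt ℝ V p)
    (w : E) :
    materialDeriv V (fderiv ℝ G · w) p
      = fderiv ℝ (materialDeriv V G) p w - materialDeriv (fderiv ℝ V · w) G p := by
  have hG' : DifferentiableAt ℝ (fderiv ℝ G) p :=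
    (hG.fderiv_right (m := 1) le_rfl).differentiableAt one_ne_zero
  rw [materialDeriv_fderiv_apply_eq_fderiv_fderiv hG', fderiv_materialDeriv_apply hG' hV,
    materialDeriv, hG.isSymmSndFDerivAt (by simp [minSmoothness_of_isRCLikeNormedField])]
  abel

theorem materialDeriv_materialDeriv_fderiv_apply (hG : ContDiff ℝ 3 G) (hV : ContDiff ℝ 2 V)
    (w : E) :
    materialDeriv V (materialDeriv V (fderiv ℝ G · w)) p
      = fderiv ℝ (materialDeriv V (materialDeriv V G)) p w
        - (2 : ℝ) • materialDeriv V (fderiv ℝ G · (fderiv ℝ V p w)) p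
        - fderiv ℝ G p (fderiv ℝ (materialDeriv V V) p w) := by
  have hMG : ContDiff ℝ 2 (materialDeriv V G) := hG.materialDeriv hV
  have hdG : ContDiff ℝ 2 (fderiv ℝ G) := hG.fderiv_right le_rfl
  have hdV : ContDiff ℝ 1 (fderiv ℝ V) := hV.fderiv_right le_rfl
  have hV1 : Differentiable ℝ V := hV.differentiable two_ne_zero
  have hsymmG := hG.contDiffAt.isSymmSndFDerivAt (x := p)
    (by rw [minSmoothness_of_isRCLikeNormedField]; norm_num)
  have hsymmV := hV.contDiffAt.isSymmSndFDerivAt (x := p)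
    (by simp [minSmoothness_of_isRCLikeNormedField])
  have hcomm : materialDeriv V (fderiv ℝ G · w)
      = fun q => fderiv ℝ (materialDeriv V G) q w - materialDeriv (fderiv ℝ V · w) G q :=
    funext fun q => materialDeriv_fderiv_apply_comm (hG.of_le (by norm_num)).contDiffAt (hV1 q) w
  have cross : materialDeriv V (materialDeriv (fderiv ℝ V · w) G) p
      = fderiv ℝ (fderiv ℝ G) p (V p) (fderiv ℝ V p w)
        + fderiv ℝ G p (fderiv ℝ (fderiv ℝ V) p (V p) w) := by
    rw [materialDeriv, fderiv_materialDeriv_apply (hdG.differentiable two_ne_zero p)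
      ((hdV.clm_apply contDiff_const).differentiable one_ne_zero p),
      ← materialDeriv_fderiv_apply_eq_fderiv_fderiv (hdV.differentiable one_ne_zero p)]
    rfl
  rw [hcomm, materialDeriv_sub (A := (fderiv ℝ (materialDeriv V G) · w))
      (B := materialDeriv (fderiv ℝ V · w) G)
      ((hMG.fderiv_right (m := 1) le_rfl).clm_apply contDiff_const
        |>.differentiable one_ne_zero p)
      (((hdG.of_le (by norm_num)).clm_apply (hdV.clm_apply contDiff_const)).differentiable
        one_ne_zero p),
    materialDeriv_fderiv_apply_comm hMG.contDiffAt (hV1 p) w, cross,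
    materialDeriv, fderiv_materialDeriv_apply (hdG.differentiable two_ne_zero p) (hV1 p),
    materialDeriv_fderiv_apply_eq_fderiv_fderiv (hdG.differentiable two_ne_zero p),
    fderiv_materialDeriv_apply (hdV.differentiable one_ne_zero p) (hV1 p), hsymmG, hsymmV,
    map_add, two_smul]
  abel

end MaterialDerivative

section Coordinates

def uncurry3 (g : ℝ → ℝ → ℝ → ℝ) (p : ℝ × ℝ × ℝ) : ℝ := g p.1 p.2.1 p.2.2

def tangentDir : Fin 2 → ℝ × ℝ × ℝ := ![(0, 1, 0), (0, 0, 1)]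

def velocity (u : Fin 2 → ℝ → ℝ → ℝ → ℝ) (p : ℝ × ℝ × ℝ) : ℝ × ℝ × ℝ :=
  (1, uncurry3 (u 0) p, uncurry3 (u 1) p)

theorem ContinuousLinearMap.apply_prodMk_prodMk {F : Type*} [NormedAddCommGroup F]
    [NormedSpace ℝ F] (L : ℝ × ℝ × ℝ →L[ℝ] F) (a b c : ℝ) :
    L (a, b, c) = a • L (1, 0, 0) + b • L (0, 1, 0) + c • L (0, 0, 1) := by
  rw [← map_smul, ← map_smul, ← map_smul, ← map_add, ← map_add]
  simp

theorem fderiv_prodMk_const_apply {A B : ℝ × ℝ × ℝ → ℝ} {p : ℝ × ℝ × ℝ}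
    (hA : DifferentiableAt ℝ A p) (hB : DifferentiableAt ℝ B p) (c : ℝ) (w : ℝ × ℝ × ℝ) :
    fderiv ℝ (fun q => (c, A q, B q)) p w = (0, fderiv ℝ A p w, fderiv ℝ B p w) := by
  rw [(differentiableAt_const c).fderiv_prodMk (hA.prodMk hB), hA.fderiv_prodMk hB]
  simp

variable {g : ℝ → ℝ → ℝ → ℝ}

theorem contDiff_uncurry3 (hg : smooth3 g) : ContDiff ℝ (⊤ : ℕ∞) (uncurry3 g) := hg

theorem differentiable_uncurry3 (hg : smooth3 g) : Differentiable ℝ (uncurry3 g) :=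
  hg.differentiable (by simp)

theorem d1_3_eq_fderiv (hg : smooth3 g) (t x y : ℝ) :
    d1_3 g t x y = fderiv ℝ (uncurry3 g) (t, x, y) (1, 0, 0) :=
  ((differentiable_uncurry3 hg _).hasFDerivAt.comp_hasDerivAt t
    ((hasDerivAt_id t).prodMk (hasDerivAt_const t (x, y)))).deriv

theorem d2_3_eq_fderiv (hg : smooth3 g) (t x y : ℝ) :
    d2_3 g t x y = fderiv ℝ (uncurry3 g) (t, x, y) (0, 1, 0) :=
  ((differentiable_uncurry3 hg _).hasFDerivAt.comp_hasDerivAt x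
    ((hasDerivAt_const x t).prodMk ((hasDerivAt_id x).prodMk (hasDerivAt_const x y)))).deriv

theorem d3_3_eq_fderiv (hg : smooth3 g) (t x y : ℝ) :
    d3_3 g t x y = fderiv ℝ (uncurry3 g) (t, x, y) (0, 0, 1) :=
  ((differentiable_uncurry3 hg _).hasFDerivAt.comp_hasDerivAt y
    ((hasDerivAt_const y t).prodMk ((hasDerivAt_const y x).prodMk (hasDerivAt_id y)))).deriv

theorem dtg_eq_fderiv (hg : smooth3 g) (i : Fin 2) (t x y : ℝ) :
    dtg i g t x y = fderiv ℝ (uncurry3 g) (t, x, y) (tangentDir i) := by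
  fin_cases i
  exacts [d2_3_eq_fderiv hg t x y, d3_3_eq_fderiv hg t x y]

theorem uncurry3_dtg (hg : smooth3 g) (i : Fin 2) :
    uncurry3 (dtg i g) = (fderiv ℝ (uncurry3 g) · (tangentDir i)) :=
  funext fun _ => dtg_eq_fderiv hg i _ _ _

theorem uncurry3_Dt2 (u : Fin 2 → ℝ → ℝ → ℝ → ℝ) (hg : smooth3 g) :
    uncurry3 (Dt2 u g) = materialDeriv (velocity u) (uncurry3 g) := by
  funext ⟨t, x, y⟩
  rw [materialDeriv, velocity, ContinuousLinearMap.apply_prodMk_prodMk]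
  simp only [uncurry3, Dt2, d1_3_eq_fderiv hg, d2_3_eq_fderiv hg, d3_3_eq_fderiv hg, one_mul,
    smul_eq_mul]

theorem Dt2_eq_materialDeriv (u : Fin 2 → ℝ → ℝ → ℝ → ℝ) (hg : smooth3 g) (t x y : ℝ) :
    Dt2 u g t x y = materialDeriv (velocity u) (uncurry3 g) (t, x, y) :=
  congrFun (uncurry3_Dt2 u hg) (t, x, y)

theorem smooth3_dtg (hg : smooth3 g) (i : Fin 2) : smooth3 (dtg i g) := by
  change ContDiff ℝ _ (uncurry3 (dtg i g))
  rw [uncurry3_dtg hg]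
  exact (hg.fderiv_right le_rfl).clm_apply contDiff_const

variable {u : Fin 2 → ℝ → ℝ → ℝ → ℝ}

theorem contDiff_velocity (hu : ∀ j, smooth3 (u j)) : ContDiff ℝ (⊤ : ℕ∞) (velocity u) :=
  contDiff_const.prodMk ((hu 0).prodMk (hu 1))

theorem smooth3_Dt2 (hu : ∀ j, smooth3 (u j)) (hg : smooth3 g) : smooth3 (Dt2 u g) := by
  change ContDiff ℝ _ (uncurry3 (Dt2 u g))
  rw [uncurry3_Dt2 u hg]
  exact (hg.fderiv_right le_rfl).clm_apply (contDiff_velocity hu)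

theorem fderiv_velocity_apply (hu : ∀ j, smooth3 (u j)) (p w : ℝ × ℝ × ℝ) :
    fderiv ℝ (velocity u) p w
      = (0, fderiv ℝ (uncurry3 (u 0)) p w, fderiv ℝ (uncurry3 (u 1)) p w) :=
  fderiv_prodMk_const_apply (differentiable_uncurry3 (hu 0) p)
    (differentiable_uncurry3 (hu 1) p) 1 w

theorem materialDeriv_velocity_self (hu : ∀ j, smooth3 (u j)) :
    materialDeriv (velocity u) (velocity u)
      = fun q => (0, uncurry3 (Dt2 u (u 0)) q, uncurry3 (Dt2 u (u 1)) q) := by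
  funext q
  rw [materialDeriv, fderiv_velocity_apply hu, uncurry3_Dt2 u (hu 0), uncurry3_Dt2 u (hu 1)]
  rfl

theorem materialDeriv_fderiv_apply_fderiv_velocity (hu : ∀ j, smooth3 (u j)) (hg : smooth3 g)
    (i : Fin 2) (t x y : ℝ) :
    materialDeriv (velocity u)
        (fderiv ℝ (uncurry3 g) · (fderiv ℝ (velocity u) (t, x, y) (tangentDir i))) (t, x, y)
      = ∑ j : Fin 2, dtg i (u j) t x y * Dt2 u (dtg j g) t x y := by
  have hdg : DifferentiableAt ℝ (fderiv ℝ (uncurry3 g)) (t, x, y) :=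
    ((contDiff_uncurry3 hg).fderiv_right (m := 1) (by norm_cast)).differentiable one_ne_zero _
  rw [materialDeriv_fderiv_apply_eq_fderiv_fderiv hdg, fderiv_velocity_apply hu,
    ContinuousLinearMap.apply_prodMk_prodMk]
  simp only [Fin.sum_univ_two, dtg_eq_fderiv (hu _), Dt2_eq_materialDeriv u (smooth3_dtg hg _),
    uncurry3_dtg hg, materialDeriv_fderiv_apply_eq_fderiv_fderiv hdg]
  simp [tangentDir]

theorem fderiv_apply_fderiv_materialDeriv_velocity_self (hu : ∀ j, smooth3 (u j))
    (hg : smooth3 g) (i : Fin 2) (t x y : ℝ) :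
    fderiv ℝ (uncurry3 g) (t, x, y)
        (fderiv ℝ (materialDeriv (velocity u) (velocity u)) (t, x, y) (tangentDir i))
      = ∑ j : Fin 2, dtg i (Dt2 u (u j)) t x y * dtg j g t x y := by
  rw [materialDeriv_velocity_self hu, fderiv_prodMk_const_apply
    (differentiable_uncurry3 (smooth3_Dt2 hu (hu 0)) _)
    (differentiable_uncurry3 (smooth3_Dt2 hu (hu 1)) _), ContinuousLinearMap.apply_prodMk_prodMk]
  simp only [Fin.sum_univ_two, dtg_eq_fderiv (smooth3_Dt2 hu (hu _)), dtg_eq_fderiv hg]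
  simp [tangentDir]

end Coordinates

/-- the second-order material-derivative identity for tangential derivatives of f. -/
theorem second_order_material_identity
    (u : Fin 2 → ℝ → ℝ → ℝ → ℝ) (f : ℝ → ℝ → ℝ → ℝ)
    (hu : ∀ j, smooth3 (u j)) (hf : smooth3 f) :
    ∀ i : Fin 2, ∀ t x y,
      Dt2 u (Dt2 u (dtg i f)) t x y
        = dtg i (Dt2 u (Dt2 u f)) t x y
          - 2 * ∑ j : Fin 2, dtg i (u j) t x y * Dt2 u (dtg j f) t x y
          - ∑ j : Fin 2, dtg i (Dt2 u (u j)) t x y * dtg j f t x y := by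
  intro i t x y
  have key := materialDeriv_materialDeriv_fderiv_apply (p := (t, x, y))
    ((contDiff_uncurry3 hf).of_le ENat.LEInfty.out) ((contDiff_velocity hu).of_le ENat.LEInfty.out)
    (tangentDir i)
  rw [materialDeriv_fderiv_apply_fderiv_velocity hu hf,
    fderiv_apply_fderiv_materialDeriv_velocity_self hu hf, smul_eq_mul,
    ← uncurry3_dtg hf, ← uncurry3_Dt2 u hf, ← uncurry3_Dt2 u (smooth3_Dt2 hu hf),
    ← uncurry3_Dt2 u (smooth3_dtg hf i), ← uncurry3_Dt2 u (smooth3_Dt2 hu (smooth3_dtg hf i)),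
    ← dtg_eq_fderiv (smooth3_Dt2 hu (smooth3_Dt2 hu hf))] at key
  exact key
end
end

section
/- Let f : ℝ × ℝ² → ℝ, u : ℝ × ℝ³ → ℝ³, p : ℝ × ℝ³ → ℝ, and F : ℝ × ℝ³ → ℝ^{3×3} be smooth. Assume: (i) the kinematic boundary condition u̲·N_f = ∂_t f holds on ℝ × ℝ²; (ii) the momentum equation ∂_t u_i + Σ_{m=1}^{3} u_m ∂_m u_i + ∂_i p = Σ_{j=1}^{3} Σ_{m=1}^{3} F_{mj} ∂_m F_{ij} holds at every point (t, x', f(t,x')) of the graph for i = 1,2,3; and (iii) F̲_j · N_f = 0 on ℝ × ℝ² for each column j = 1,2,3. Then for i = 1,2,3 and all (t,x'): D_t u̲_i = −(∂_i p)̲ + Σ_{j=1}^{3} Σ_{s=1}^{2} F̲_{sj} ∂_s (F̲_{ij}). -/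
open scoped BigOperators

noncomputable section

section AuxChainRule

/-- General chain rule for a smooth function of 4 real variables along a curve. -/
lemma hasDerivAt_comp4 {v : ℝ → ℝ → ℝ → ℝ → ℝ} (hv : smooth4 v)
    {a b c d : ℝ → ℝ} {a' b' c' d' : ℝ} {t : ℝ}
    (ha : HasDerivAt a a' t) (hb : HasDerivAt b b' t)
    (hc : HasDerivAt c c' t) (hd : HasDerivAt d d' t) :
    HasDerivAt (fun s => v (a s) (b s) (c s) (d s))
      (a' * d1_4 v (a t) (b t) (c t) (d t) + b' * d2_4 v (a t) (b t) (c t) (d t)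
        + c' * d3_4 v (a t) (b t) (c t) (d t) + d' * d4_4 v (a t) (b t) (c t) (d t)) t := by
  set V : ℝ × ℝ × ℝ × ℝ → ℝ := fun q => v q.1 q.2.1 q.2.2.1 q.2.2.2 with hVdef
  have hV : Differentiable ℝ V := hv.differentiable (by simp)
  set z : ℝ × ℝ × ℝ × ℝ := (a t, b t, c t, d t) with hzdef
  have hFz : HasFDerivAt V (fderiv ℝ V z) z := (hV z).hasFDerivAt
  set L := fderiv ℝ V z with hLdef
  -- basis curves giving the partial derivatives
  have h1 : HasDerivAt (fun s : ℝ => ((s, b t, c t, d t) : ℝ × ℝ × ℝ × ℝ))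
      ((1, 0, 0, 0) : ℝ × ℝ × ℝ × ℝ) (a t) :=
    (hasDerivAt_id _).prodMk ((hasDerivAt_const _ _).prodMk
      ((hasDerivAt_const _ _).prodMk (hasDerivAt_const _ _)))
  have h2 : HasDerivAt (fun s : ℝ => ((a t, s, c t, d t) : ℝ × ℝ × ℝ × ℝ))
      ((0, 1, 0, 0) : ℝ × ℝ × ℝ × ℝ) (b t) :=
    (hasDerivAt_const _ _).prodMk ((hasDerivAt_id _).prodMk
      ((hasDerivAt_const _ _).prodMk (hasDerivAt_const _ _)))
  have h3 : HasDerivAt (fun s : ℝ => ((a t, b t, s, d t) : ℝ × ℝ × ℝ × ℝ))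
      ((0, 0, 1, 0) : ℝ × ℝ × ℝ × ℝ) (c t) :=
    (hasDerivAt_const _ _).prodMk ((hasDerivAt_const _ _).prodMk
      ((hasDerivAt_id _).prodMk (hasDerivAt_const _ _)))
  have h4 : HasDerivAt (fun s : ℝ => ((a t, b t, c t, s) : ℝ × ℝ × ℝ × ℝ))
      ((0, 0, 0, 1) : ℝ × ℝ × ℝ × ℝ) (d t) :=
    (hasDerivAt_const _ _).prodMk ((hasDerivAt_const _ _).prodMk
      ((hasDerivAt_const _ _).prodMk (hasDerivAt_id _)))
  have he1 : L ((1, 0, 0, 0) : ℝ × ℝ × ℝ × ℝ) = d1_4 v (a t) (b t) (c t) (d t) :=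
    (HasFDerivAt.comp_hasDerivAt _ hFz h1).deriv.symm
  have he2 : L ((0, 1, 0, 0) : ℝ × ℝ × ℝ × ℝ) = d2_4 v (a t) (b t) (c t) (d t) :=
    (HasFDerivAt.comp_hasDerivAt _ hFz h2).deriv.symm
  have he3 : L ((0, 0, 1, 0) : ℝ × ℝ × ℝ × ℝ) = d3_4 v (a t) (b t) (c t) (d t) :=
    (HasFDerivAt.comp_hasDerivAt _ hFz h3).deriv.symm
  have he4 : L ((0, 0, 0, 1) : ℝ × ℝ × ℝ × ℝ) = d4_4 v (a t) (b t) (c t) (d t) :=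
    (HasFDerivAt.comp_hasDerivAt _ hFz h4).deriv.symm
  have hγ : HasDerivAt (fun s => ((a s, b s, c s, d s) : ℝ × ℝ × ℝ × ℝ))
      ((a', b', c', d') : ℝ × ℝ × ℝ × ℝ) t := ha.prodMk (hb.prodMk (hc.prodMk hd))
  have hmain : HasDerivAt (fun s => v (a s) (b s) (c s) (d s))
      (L ((a', b', c', d') : ℝ × ℝ × ℝ × ℝ)) t :=
    by have := HasFDerivAt.comp_hasDerivAt _ hFz hγ; exact this
  have hdec : ((a', b', c', d') : ℝ × ℝ × ℝ × ℝ)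
      = a' • ((1, 0, 0, 0) : ℝ × ℝ × ℝ × ℝ) + b' • ((0, 1, 0, 0) : ℝ × ℝ × ℝ × ℝ)
        + c' • ((0, 0, 1, 0) : ℝ × ℝ × ℝ × ℝ) + d' • ((0, 0, 0, 1) : ℝ × ℝ × ℝ × ℝ) := by
    simp [Prod.ext_iff]
  rw [hdec, map_add, map_add, map_add, map_smul, map_smul, map_smul, map_smul,
    he1, he2, he3, he4] at hmain
  simpa [smul_eq_mul] using hmain

variable {f : ℝ → ℝ → ℝ → ℝ}

lemma f_sec1 (hf : smooth3 f) (t x y : ℝ) :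
    HasDerivAt (fun s => f s x y) (d1_3 f t x y) t := by
  have hfd : Differentiable ℝ (fun q : ℝ × ℝ × ℝ => f q.1 q.2.1 q.2.2) :=
    hf.differentiable (by simp)
  have h : Differentiable ℝ (fun s : ℝ => f s x y) :=
    hfd.comp (differentiable_id.prodMk ((differentiable_const _).prodMk (differentiable_const _)))
  exact (h t).hasDerivAt

lemma f_sec2 (hf : smooth3 f) (t x y : ℝ) :
    HasDerivAt (fun s => f t s y) (d2_3 f t x y) x := by
  have hfd : Differentiable ℝ (fun q : ℝ × ℝ × ℝ => f q.1 q.2.1 q.2.2) :=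
    hf.differentiable (by simp)
  have h : Differentiable ℝ (fun s : ℝ => f t s y) :=
    hfd.comp ((differentiable_const _).prodMk (differentiable_id.prodMk (differentiable_const _)))
  exact (h x).hasDerivAt

lemma f_sec3 (hf : smooth3 f) (t x y : ℝ) :
    HasDerivAt (fun s => f t x s) (d3_3 f t x y) y := by
  have hfd : Differentiable ℝ (fun q : ℝ × ℝ × ℝ => f q.1 q.2.1 q.2.2) :=
    hf.differentiable (by simp)
  have h : Differentiable ℝ (fun s : ℝ => f t x s) :=
    hfd.comp ((differentiable_const _).prodMk ((differentiable_const _).prodMk differentiable_id))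
  exact (h y).hasDerivAt

lemma tr_d1 {v : ℝ → ℝ → ℝ → ℝ → ℝ} (hv : smooth4 v) (hf : smooth3 f) (t x y : ℝ) :
    d1_3 (tr v f) t x y
      = tr (d1_4 v) f t x y + d1_3 f t x y * tr (d4_4 v) f t x y := by
  have h := hasDerivAt_comp4 hv (hasDerivAt_id t) (hasDerivAt_const t x)
    (hasDerivAt_const t y) (f_sec1 hf t x y)
  have hd := h.deriv
  simp only [one_mul, zero_mul, add_zero, zero_add] at hd
  simpa [tr, d1_3] using hd

lemma tr_d2 {v : ℝ → ℝ → ℝ → ℝ → ℝ} (hv : smooth4 v) (hf : smooth3 f) (t x y : ℝ) :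
    d2_3 (tr v f) t x y
      = tr (d2_4 v) f t x y + d2_3 f t x y * tr (d4_4 v) f t x y := by
  have h := hasDerivAt_comp4 hv (hasDerivAt_const x t) (hasDerivAt_id x)
    (hasDerivAt_const x y) (f_sec2 hf t x y)
  have hd := h.deriv
  simp only [one_mul, zero_mul, add_zero, zero_add] at hd
  simpa [tr, d2_3] using hd

lemma tr_d3 {v : ℝ → ℝ → ℝ → ℝ → ℝ} (hv : smooth4 v) (hf : smooth3 f) (t x y : ℝ) :
    d3_3 (tr v f) t x y
      = tr (d3_4 v) f t x y + d3_3 f t x y * tr (d4_4 v) f t x y := by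
  have h := hasDerivAt_comp4 hv (hasDerivAt_const y t) (hasDerivAt_const y x)
    (hasDerivAt_id y) (f_sec3 hf t x y)
  have hd := h.deriv
  simp only [one_mul, zero_mul, add_zero, zero_add] at hd
  simpa [tr, d3_3] using hd

end AuxChainRule

/-- trace of the momentum equation on the free interface. -/
theorem trace_momentum_equation
    (f : ℝ → ℝ → ℝ → ℝ) (u : Fin 3 → ℝ → ℝ → ℝ → ℝ → ℝ)
    (p : ℝ → ℝ → ℝ → ℝ → ℝ) (F : Fin 3 → Fin 3 → ℝ → ℝ → ℝ → ℝ → ℝ)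
    (hf : smooth3 f) (hu : ∀ i, smooth4 (u i)) (hp : smooth4 p)
    (hF : ∀ i j, smooth4 (F i j))
    (hkbc : ∀ t x y, (∑ k : Fin 3, tr (u k) f t x y * Nf f k t x y) = d1_3 f t x y)
    (hmom : ∀ i : Fin 3, ∀ t x y,
      tr (d1_4 (u i)) f t x y
        + (∑ m : Fin 3, tr (u m) f t x y * tr (dsp m (u i)) f t x y)
        + tr (dsp i p) f t x y
        = ∑ j : Fin 3, ∑ m : Fin 3, tr (F m j) f t x y * tr (dsp m (F i j)) f t x y)
    (htang : ∀ j : Fin 3, ∀ t x y,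
      (∑ m : Fin 3, tr (F m j) f t x y * Nf f m t x y) = 0) :
    ∀ i : Fin 3, ∀ t x y,
      Dt u f (tr (u i) f) t x y
        = -(tr (dsp i p) f t x y)
          + ∑ j : Fin 3, ∑ s : Fin 2,
              tr (F s.castSucc j) f t x y * dtg s (tr (F i j) f) t x y := by
  intro i t x y
  have c1 := tr_d1 (hu i) hf t x y
  have c2 := tr_d2 (hu i) hf t x y
  have c3 := tr_d3 (hu i) hf t x y
  have e20 := tr_d2 (hF i 0) hf t x y
  have e21 := tr_d2 (hF i 1) hf t x y
  have e22 := tr_d2 (hF i 2) hf t x y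
  have e30 := tr_d3 (hF i 0) hf t x y
  have e31 := tr_d3 (hF i 1) hf t x y
  have e32 := tr_d3 (hF i 2) hf t x y
  have hk := hkbc t x y
  have hm := hmom i t x y
  have ht0 := htang 0 t x y
  have ht1 := htang 1 t x y
  have ht2 := htang 2 t x y
  simp only [Fin.sum_univ_three, Fin.sum_univ_two, Nf, dsp, dtg, Dt,
    Matrix.cons_val_zero, Matrix.cons_val_one, Matrix.head_cons,
    Matrix.cons_val_two, Matrix.tail_cons, Fin.castSucc_zero, Fin.castSucc_one,
    mul_one, mul_neg] at hk hm ht0 ht1 ht2 ⊢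
  linear_combination c1 + tr (u 0) f t x y * c2 + tr (u 1) f t x y * c3
    - tr (F 0 0) f t x y * e20 - tr (F 0 1) f t x y * e21 - tr (F 0 2) f t x y * e22
    - tr (F 1 0) f t x y * e30 - tr (F 1 1) f t x y * e31 - tr (F 1 2) f t x y * e32
    + hm - tr (d4_4 (u i)) f t x y * hk
    + tr (d4_4 (F i 0)) f t x y * ht0 + tr (d4_4 (F i 1)) f t x y * ht1
    + tr (d4_4 (F i 2)) f t x y * ht2
end
end

section
/- Let f : ℝ × ℝ² → ℝ, u : ℝ × ℝ³ → ℝ³, p : ℝ × ℝ³ → ℝ, and F : ℝ × ℝ³ → ℝ^{3×3} be smooth. Assume: (i) the kinematic boundary condition u̲·N_f = ∂_t f holds on ℝ × ℝ²; (ii) the third component of the momentum equation, ∂_t u₃ + Σ_{m=1}^{3} u_m ∂_m u₃ + ∂₃ p = Σ_{j=1}^{3} Σ_{m=1}^{3} F_{mj} ∂_m F_{3j}, holds at every point (t, x', f(t,x')) of the graph; and (iii) F̲_k · N_f = 0 on ℝ × ℝ² for each column k = 1,2,3. Then the interface function satisfies the second-order evolution equation D_t(D_t f) = −(∂₃ p)̲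 + Σ_{k=1}^{3} D_{F_k}(D_{F_k} f) at every (t,x') ∈ ℝ × ℝ². -/
open scoped BigOperators

noncomputable section

private lemma smooth_top {g : ℝ × ℝ × ℝ × ℝ → ℝ} (h : ContDiff ℝ (⊤ : ℕ∞) g) :
    Differentiable ℝ g := h.differentiable (by simp)

private lemma smooth3_top {g : ℝ × ℝ × ℝ → ℝ} (h : ContDiff ℝ (⊤ : ℕ∞) g) :
    Differentiable ℝ g := h.differentiable (by simp)

private lemma hasDerivAt_f1 (f : ℝ → ℝ → ℝ → ℝ) (hf : smooth3 f) (t x y : ℝ) :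
    HasDerivAt (fun s => f s x y) (d1_3 f t x y) t := by
  have h : Differentiable ℝ (fun s : ℝ => f s x y) :=
    (smooth3_top hf).comp (differentiable_id.prodMk (differentiable_const (x, y)))
  exact (h t).hasDerivAt

private lemma hasDerivAt_f2 (f : ℝ → ℝ → ℝ → ℝ) (hf : smooth3 f) (t x y : ℝ) :
    HasDerivAt (fun s => f t s y) (d2_3 f t x y) x := by
  have h : Differentiable ℝ (fun s : ℝ => f t s y) :=
    (smooth3_top hf).comp ((differentiable_const t).prodMk (differentiable_id.prodMk (differentiable_const y)))
  exact (h x).hasDerivAt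

private lemma hasDerivAt_f3 (f : ℝ → ℝ → ℝ → ℝ) (hf : smooth3 f) (t x y : ℝ) :
    HasDerivAt (fun s => f t x s) (d3_3 f t x y) y := by
  have h : Differentiable ℝ (fun s : ℝ => f t x s) :=
    (smooth3_top hf).comp ((differentiable_const t).prodMk ((differentiable_const x).prodMk differentiable_id))
  exact (h y).hasDerivAt

private lemma tr_chain1 (v : ℝ → ℝ → ℝ → ℝ → ℝ) (hv : smooth4 v)
    (f : ℝ → ℝ → ℝ → ℝ) (hf : smooth3 f) (t x y : ℝ) :
    d1_3 (tr v f) t x y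
      = tr (d1_4 v) f t x y + d1_3 f t x y * tr (d4_4 v) f t x y := by
  set V : ℝ × ℝ × ℝ × ℝ → ℝ := fun q => v q.1 q.2.1 q.2.2.1 q.2.2.2 with hVdef
  have hV : Differentiable ℝ V := smooth_top hv
  set pt : ℝ × ℝ × ℝ × ℝ := (t, x, y, f t x y) with hpt
  have hγ : HasDerivAt (fun s : ℝ => ((s, x, y, f s x y) : ℝ × ℝ × ℝ × ℝ))
      ((1, 0, 0, d1_3 f t x y) : ℝ × ℝ × ℝ × ℝ) t :=
    (hasDerivAt_id t).prodMk ((hasDerivAt_const t x).prodMk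
      ((hasDerivAt_const t y).prodMk (hasDerivAt_f1 f hf t x y)))
  have hcomp : HasDerivAt (fun s => v s x y (f s x y))
      (fderiv ℝ V pt (1, 0, 0, d1_3 f t x y)) t := by
    have := (hV pt).hasFDerivAt.comp_hasDerivAt t hγ
    exact this
  have h1 : HasDerivAt (fun s => v s x y (f t x y)) (fderiv ℝ V pt (1, 0, 0, 0)) t := by
    have := (hV pt).hasFDerivAt.comp_hasDerivAt t
      ((hasDerivAt_id t).prodMk ((hasDerivAt_const t x).prodMk
        ((hasDerivAt_const t y).prodMk (hasDerivAt_const t (f t x y)))))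
    exact this
  have h4 : HasDerivAt (fun s => v t x y s) (fderiv ℝ V pt (0, 0, 0, 1)) (f t x y) := by
    have := (hV pt).hasFDerivAt.comp_hasDerivAt (f t x y)
      ((hasDerivAt_const (f t x y) t).prodMk ((hasDerivAt_const (f t x y) x).prodMk
        ((hasDerivAt_const (f t x y) y).prodMk (hasDerivAt_id (f t x y)))))
    exact this
  have e0 : d1_3 (tr v f) t x y = fderiv ℝ V pt (1, 0, 0, d1_3 f t x y) := hcomp.deriv
  have e1 : tr (d1_4 v) f t x y = fderiv ℝ V pt (1, 0, 0, 0) := h1.deriv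
  have e4 : tr (d4_4 v) f t x y = fderiv ℝ V pt (0, 0, 0, 1) := h4.deriv
  rw [e0, e1, e4]
  have key : ((1, 0, 0, d1_3 f t x y) : ℝ × ℝ × ℝ × ℝ)
      = (1, 0, 0, 0) + d1_3 f t x y • ((0, 0, 0, 1) : ℝ × ℝ × ℝ × ℝ) := by
    simp [Prod.ext_iff]
  rw [key, map_add, map_smul, smul_eq_mul]

private lemma tr_chain2 (v : ℝ → ℝ → ℝ → ℝ → ℝ) (hv : smooth4 v)
    (f : ℝ → ℝ → ℝ → ℝ) (hf : smooth3 f) (t x y : ℝ) :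
    d2_3 (tr v f) t x y
      = tr (d2_4 v) f t x y + d2_3 f t x y * tr (d4_4 v) f t x y := by
  set V : ℝ × ℝ × ℝ × ℝ → ℝ := fun q => v q.1 q.2.1 q.2.2.1 q.2.2.2 with hVdef
  have hV : Differentiable ℝ V := smooth_top hv
  set pt : ℝ × ℝ × ℝ × ℝ := (t, x, y, f t x y) with hpt
  have hγ : HasDerivAt (fun s : ℝ => ((t, s, y, f t s y) : ℝ × ℝ × ℝ × ℝ))
      ((0, 1, 0, d2_3 f t x y) : ℝ × ℝ × ℝ × ℝ) x :=
    (hasDerivAt_const x t).prodMk ((hasDerivAt_id x).prodMk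
      ((hasDerivAt_const x y).prodMk (hasDerivAt_f2 f hf t x y)))
  have hcomp : HasDerivAt (fun s => v t s y (f t s y))
      (fderiv ℝ V pt (0, 1, 0, d2_3 f t x y)) x := by
    have := (hV pt).hasFDerivAt.comp_hasDerivAt x hγ
    exact this
  have h1 : HasDerivAt (fun s => v t s y (f t x y)) (fderiv ℝ V pt (0, 1, 0, 0)) x := by
    have := (hV pt).hasFDerivAt.comp_hasDerivAt x
      ((hasDerivAt_const x t).prodMk ((hasDerivAt_id x).prodMk
        ((hasDerivAt_const x y).prodMk (hasDerivAt_const x (f t x y)))))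
    exact this
  have h4 : HasDerivAt (fun s => v t x y s) (fderiv ℝ V pt (0, 0, 0, 1)) (f t x y) := by
    have := (hV pt).hasFDerivAt.comp_hasDerivAt (f t x y)
      ((hasDerivAt_const (f t x y) t).prodMk ((hasDerivAt_const (f t x y) x).prodMk
        ((hasDerivAt_const (f t x y) y).prodMk (hasDerivAt_id (f t x y)))))
    exact this
  have e0 : d2_3 (tr v f) t x y = fderiv ℝ V pt (0, 1, 0, d2_3 f t x y) := hcomp.deriv
  have e1 : tr (d2_4 v) f t x y = fderiv ℝ V pt (0, 1, 0, 0) := h1.deriv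
  have e4 : tr (d4_4 v) f t x y = fderiv ℝ V pt (0, 0, 0, 1) := h4.deriv
  rw [e0, e1, e4]
  have key : ((0, 1, 0, d2_3 f t x y) : ℝ × ℝ × ℝ × ℝ)
      = (0, 1, 0, 0) + d2_3 f t x y • ((0, 0, 0, 1) : ℝ × ℝ × ℝ × ℝ) := by
    simp [Prod.ext_iff]
  rw [key, map_add, map_smul, smul_eq_mul]

private lemma tr_chain3 (v : ℝ → ℝ → ℝ → ℝ → ℝ) (hv : smooth4 v)
    (f : ℝ → ℝ → ℝ → ℝ) (hf : smooth3 f) (t x y : ℝ) :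
    d3_3 (tr v f) t x y
      = tr (d3_4 v) f t x y + d3_3 f t x y * tr (d4_4 v) f t x y := by
  set V : ℝ × ℝ × ℝ × ℝ → ℝ := fun q => v q.1 q.2.1 q.2.2.1 q.2.2.2 with hVdef
  have hV : Differentiable ℝ V := smooth_top hv
  set pt : ℝ × ℝ × ℝ × ℝ := (t, x, y, f t x y) with hpt
  have hγ : HasDerivAt (fun s : ℝ => ((t, x, s, f t x s) : ℝ × ℝ × ℝ × ℝ))
      ((0, 0, 1, d3_3 f t x y) : ℝ × ℝ × ℝ × ℝ) y :=
    (hasDerivAt_const y t).prodMk ((hasDerivAt_const y x).prodMk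
      ((hasDerivAt_id y).prodMk (hasDerivAt_f3 f hf t x y)))
  have hcomp : HasDerivAt (fun s => v t x s (f t x s))
      (fderiv ℝ V pt (0, 0, 1, d3_3 f t x y)) y := by
    have := (hV pt).hasFDerivAt.comp_hasDerivAt y hγ
    exact this
  have h1 : HasDerivAt (fun s => v t x s (f t x y)) (fderiv ℝ V pt (0, 0, 1, 0)) y := by
    have := (hV pt).hasFDerivAt.comp_hasDerivAt y
      ((hasDerivAt_const y t).prodMk ((hasDerivAt_const y x).prodMk
        ((hasDerivAt_id y).prodMk (hasDerivAt_const y (f t x y)))))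
    exact this
  have h4 : HasDerivAt (fun s => v t x y s) (fderiv ℝ V pt (0, 0, 0, 1)) (f t x y) := by
    have := (hV pt).hasFDerivAt.comp_hasDerivAt (f t x y)
      ((hasDerivAt_const (f t x y) t).prodMk ((hasDerivAt_const (f t x y) x).prodMk
        ((hasDerivAt_const (f t x y) y).prodMk (hasDerivAt_id (f t x y)))))
    exact this
  have e0 : d3_3 (tr v f) t x y = fderiv ℝ V pt (0, 0, 1, d3_3 f t x y) := hcomp.deriv
  have e1 : tr (d3_4 v) f t x y = fderiv ℝ V pt (0, 0, 1, 0) := h1.deriv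
  have e4 : tr (d4_4 v) f t x y = fderiv ℝ V pt (0, 0, 0, 1) := h4.deriv
  rw [e0, e1, e4]
  have key : ((0, 0, 1, d3_3 f t x y) : ℝ × ℝ × ℝ × ℝ)
      = (0, 0, 1, 0) + d3_3 f t x y • ((0, 0, 0, 1) : ℝ × ℝ × ℝ × ℝ) := by
    simp [Prod.ext_iff]
  rw [key, map_add, map_smul, smul_eq_mul]


/-- second-order evolution D_t² f = −(∂₃p)̲ + Σ_k D_{F_k}² f for the interface. -/
theorem interface_second_order_evolution
    (f : ℝ → ℝ → ℝ → ℝ) (u : Fin 3 → ℝ → ℝ → ℝ → ℝ → ℝ)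
    (p : ℝ → ℝ → ℝ → ℝ → ℝ) (F : Fin 3 → Fin 3 → ℝ → ℝ → ℝ → ℝ → ℝ)
    (hf : smooth3 f) (hu : ∀ i, smooth4 (u i)) (hp : smooth4 p)
    (hF : ∀ i j, smooth4 (F i j))
    (hkbc : ∀ t x y, (∑ k : Fin 3, tr (u k) f t x y * Nf f k t x y) = d1_3 f t x y)
    (hmom3 : ∀ t x y,
      tr (d1_4 (u 2)) f t x y
        + (∑ m : Fin 3, tr (u m) f t x y * tr (dsp m (u 2)) f t x y)
        + tr (dsp 2 p) f t x y
        = ∑ j : Fin 3, ∑ m : Fin 3, tr (F m j) f t x y * tr (dsp m (F 2 j)) f t x y)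
    (htang : ∀ k : Fin 3, ∀ t x y,
      (∑ m : Fin 3, tr (F m k) f t x y * Nf f m t x y) = 0) :
    ∀ t x y,
      Dt u f (Dt u f f) t x y
        = -(tr (dsp 2 p) f t x y) + ∑ k : Fin 3, DF F f k (DF F f k f) t x y := by
  intro t x y
  -- From the kinematic boundary condition: D_t f = trace of u₃.
  have hDtf : Dt u f f = tr (u 2) f := by
    funext t x y
    have h := hkbc t x y
    simp only [Fin.sum_univ_three, Nf, Matrix.cons_val_zero, Matrix.cons_val_one,
      Matrix.head_cons, Matrix.cons_val_two, Matrix.tail_cons, mul_one, mul_neg] at h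
    simp only [Dt]
    linarith
  -- From the tangency condition: D_{F_k} f = trace of F_{3k}.
  have hDFf : ∀ k, DF F f k f = tr (F 2 k) f := by
    intro k
    funext t x y
    have h := htang k t x y
    simp only [Fin.sum_univ_three, Nf, Matrix.cons_val_zero, Matrix.cons_val_one,
      Matrix.head_cons, Matrix.cons_val_two, Matrix.tail_cons, mul_one, mul_neg] at h
    simp only [DF]
    linarith
  rw [hDtf]
  simp only [hDFf]
  have hkbc' := hkbc t x y
  have hmom' := hmom3 t x y
  have ht0 := htang 0 t x y
  have ht1 := htang 1 t x y
  have ht2 := htang 2 t x y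
  simp only [Fin.sum_univ_three, Nf, dsp, Matrix.cons_val_zero, Matrix.cons_val_one,
    Matrix.head_cons, Matrix.cons_val_two, Matrix.tail_cons, mul_one, mul_neg]
    at hkbc' hmom' ht0 ht1 ht2
  simp only [Dt, DF, Fin.sum_univ_three, dsp, Matrix.cons_val_zero, Matrix.cons_val_one,
    Matrix.head_cons, Matrix.cons_val_two, Matrix.tail_cons]
  rw [tr_chain1 (u 2) (hu 2) f hf, tr_chain2 (u 2) (hu 2) f hf, tr_chain3 (u 2) (hu 2) f hf,
    tr_chain2 (F 2 0) (hF 2 0) f hf, tr_chain3 (F 2 0) (hF 2 0) f hf,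
    tr_chain2 (F 2 1) (hF 2 1) f hf, tr_chain3 (F 2 1) (hF 2 1) f hf,
    tr_chain2 (F 2 2) (hF 2 2) f hf, tr_chain3 (F 2 2) (hF 2 2) f hf]
  linear_combination hmom' - tr (d4_4 (u 2)) f t x y * hkbc'
    + tr (d4_4 (F 2 0)) f t x y * ht0
    + tr (d4_4 (F 2 1)) f t x y * ht1
    + tr (d4_4 (F 2 2)) f t x y * ht2
end
end

section
/- Let p, φ : ℝ³ → ℝ and f : ℝ² → ℝ be smooth, let i ∈ {1,2}, and assume φ(x', f(x')) = ∂_i f(x') for all x' ∈ ℝ². Define q : ℝ³ → ℝ by q = ∂_i p + (∂₃ p) φ. Then for all x' ∈ ℝ²: −∂_i[(∂₃p)̲](x') + Σ_{j=1}^{2} ∂_i[(∂_jp)̲](x') · ∂_j f(x') = −N_f(x') · (∇q)(x', f(x')) + (∂₃p)(x', f(x')) · ( N_f(x') · (∇φ)(x', f(x')) ). -/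
open scoped BigOperators

noncomputable section

namespace PRaux

def e1 : ℝ × ℝ × ℝ := (1, 0, 0)
def e2 : ℝ × ℝ × ℝ := (0, 1, 0)
def e3 : ℝ × ℝ × ℝ := (0, 0, 1)

lemma hasDerivAt_slice1 {v : ℝ × ℝ × ℝ → ℝ} {a b c : ℝ}
    (hv : DifferentiableAt ℝ v (a, b, c)) :
    HasDerivAt (fun s => v (s, b, c)) (fderiv ℝ v (a, b, c) e1) a := by
  have hg : HasDerivAt (fun s : ℝ => ((s, b, c) : ℝ × ℝ × ℝ)) e1 a :=
    (hasDerivAt_id a).prodMk (hasDerivAt_const a ((b, c) : ℝ × ℝ))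
  exact hv.hasFDerivAt.comp_hasDerivAt a hg

lemma hasDerivAt_slice2 {v : ℝ × ℝ × ℝ → ℝ} {a b c : ℝ}
    (hv : DifferentiableAt ℝ v (a, b, c)) :
    HasDerivAt (fun s => v (a, s, c)) (fderiv ℝ v (a, b, c) e2) b := by
  have hg : HasDerivAt (fun s : ℝ => ((a, s, c) : ℝ × ℝ × ℝ)) e2 b :=
    (hasDerivAt_const b a).prodMk ((hasDerivAt_id b).prodMk (hasDerivAt_const b c))
  exact hv.hasFDerivAt.comp_hasDerivAt b hg

lemma hasDerivAt_slice3 {v : ℝ × ℝ × ℝ → ℝ} {a b c : ℝ}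
    (hv : DifferentiableAt ℝ v (a, b, c)) :
    HasDerivAt (fun s => v (a, b, s)) (fderiv ℝ v (a, b, c) e3) c := by
  have hg : HasDerivAt (fun s : ℝ => ((a, b, s) : ℝ × ℝ × ℝ)) e3 c :=
    (hasDerivAt_const c a).prodMk ((hasDerivAt_const c b).prodMk (hasDerivAt_id c))
  exact hv.hasFDerivAt.comp_hasDerivAt c hg

def U3 (v : ℝ → ℝ → ℝ → ℝ) : ℝ × ℝ × ℝ → ℝ := fun u => v u.1 u.2.1 u.2.2

lemma diff3 {F : Type*} [NormedAddCommGroup F] [NormedSpace ℝ F] {v : ℝ × ℝ × ℝ → F}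
    (hv : ContDiff ℝ (⊤ : ℕ∞) v) : Differentiable ℝ v :=
  hv.differentiable (by simp)

lemma d1_3_eq {v : ℝ → ℝ → ℝ → ℝ} (hv : smooth3 v) (a b c : ℝ) :
    d1_3 v a b c = fderiv ℝ (U3 v) (a, b, c) e1 :=
  (hasDerivAt_slice1 (diff3 hv (a, b, c))).deriv

lemma d2_3_eq {v : ℝ → ℝ → ℝ → ℝ} (hv : smooth3 v) (a b c : ℝ) :
    d2_3 v a b c = fderiv ℝ (U3 v) (a, b, c) e2 :=
  (hasDerivAt_slice2 (diff3 hv (a, b, c))).deriv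

lemma d3_3_eq {v : ℝ → ℝ → ℝ → ℝ} (hv : smooth3 v) (a b c : ℝ) :
    d3_3 v a b c = fderiv ℝ (U3 v) (a, b, c) e3 :=
  (hasDerivAt_slice3 (diff3 hv (a, b, c))).deriv

lemma contDiff_fderiv {v : ℝ × ℝ × ℝ → ℝ} (hv : ContDiff ℝ (⊤ : ℕ∞) v) :
    ContDiff ℝ (⊤ : ℕ∞) (fderiv ℝ v) :=
  hv.fderiv_right (by exact_mod_cast le_top)

lemma contDiff_Q {v : ℝ × ℝ × ℝ → ℝ} (hv : ContDiff ℝ (⊤ : ℕ∞) v) (e : ℝ × ℝ × ℝ) :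
    ContDiff ℝ (⊤ : ℕ∞) (fun u => fderiv ℝ v u e) :=
  (ContinuousLinearMap.apply ℝ ℝ e).contDiff.comp (contDiff_fderiv hv)

lemma fderiv_Q {v : ℝ × ℝ × ℝ → ℝ} (hv : ContDiff ℝ (⊤ : ℕ∞) v) (e w u : ℝ × ℝ × ℝ) :
    fderiv ℝ (fun x => fderiv ℝ v x e) u w = fderiv ℝ (fderiv ℝ v) u w e := by
  rw [fderiv_clm_apply (diff3 (contDiff_fderiv hv) u) (differentiableAt_const e)]
  simp

lemma second_symm {v : ℝ × ℝ × ℝ → ℝ} (hv : ContDiff ℝ (⊤ : ℕ∞) v) (u w z : ℝ × ℝ × ℝ) :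
    fderiv ℝ (fderiv ℝ v) u w z = fderiv ℝ (fderiv ℝ v) u z w :=
  second_derivative_symmetric (fun y => (diff3 hv y).hasFDerivAt)
    (diff3 (contDiff_fderiv hv) u).hasFDerivAt w z

lemma hasDerivAt_d1_2 {f : ℝ → ℝ → ℝ} (hf : smooth2 f) (x y : ℝ) :
    HasDerivAt (fun s => f s y) (d1_2 f x y) x := by
  have h := ((hf.differentiable (by simp) (x, y)).hasFDerivAt).comp_hasDerivAt x
    ((hasDerivAt_id x).prodMk (hasDerivAt_const x y))
  have hd : d1_2 f x y = fderiv ℝ (fun u : ℝ × ℝ => f u.1 u.2) (x, y) (1, 0) := h.deriv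
  exact hd ▸ h

lemma hasDerivAt_d2_2 {f : ℝ → ℝ → ℝ} (hf : smooth2 f) (x y : ℝ) :
    HasDerivAt (fun s => f x s) (d2_2 f x y) y := by
  have h := ((hf.differentiable (by simp) (x, y)).hasFDerivAt).comp_hasDerivAt y
    ((hasDerivAt_const y x).prodMk (hasDerivAt_id y))
  have hd : d2_2 f x y = fderiv ℝ (fun u : ℝ × ℝ => f u.1 u.2) (x, y) (0, 1) := h.deriv
  exact hd ▸ h

lemma tr2_d1 {v : ℝ → ℝ → ℝ → ℝ} {f : ℝ → ℝ → ℝ} (hv : smooth3 v) (hf : smooth2 f) (x y : ℝ) :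
    d1_2 (tr2 v f) x y
      = fderiv ℝ (U3 v) (x, y, f x y) e1 + fderiv ℝ (U3 v) (x, y, f x y) e3 * d1_2 f x y := by
  have hpath : HasDerivAt (fun s : ℝ => ((s, y, f s y) : ℝ × ℝ × ℝ)) (1, 0, d1_2 f x y) x :=
    (hasDerivAt_id x).prodMk ((hasDerivAt_const x y).prodMk (hasDerivAt_d1_2 hf x y))
  have h := (diff3 hv (x, y, f x y)).hasFDerivAt.comp_hasDerivAt x hpath
  have hd : d1_2 (tr2 v f) x y = fderiv ℝ (U3 v) (x, y, f x y) (1, 0, d1_2 f x y) := h.deriv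
  rw [hd, show ((1, 0, d1_2 f x y) : ℝ × ℝ × ℝ) = e1 + (d1_2 f x y) • e3 by simp [e1, e3],
    map_add, map_smul]
  simp [smul_eq_mul]; ring

lemma tr2_d2 {v : ℝ → ℝ → ℝ → ℝ} {f : ℝ → ℝ → ℝ} (hv : smooth3 v) (hf : smooth2 f) (x y : ℝ) :
    d2_2 (tr2 v f) x y
      = fderiv ℝ (U3 v) (x, y, f x y) e2 + fderiv ℝ (U3 v) (x, y, f x y) e3 * d2_2 f x y := by
  have hpath : HasDerivAt (fun s : ℝ => ((x, s, f x s) : ℝ × ℝ × ℝ)) (0, 1, d2_2 f x y) y :=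
    (hasDerivAt_const y x).prodMk ((hasDerivAt_id y).prodMk (hasDerivAt_d2_2 hf x y))
  have h := (diff3 hv (x, y, f x y)).hasFDerivAt.comp_hasDerivAt y hpath
  have hd : d2_2 (tr2 v f) x y = fderiv ℝ (U3 v) (x, y, f x y) (0, 1, d2_2 f x y) := h.deriv
  rw [hd, show ((0, 1, d2_2 f x y) : ℝ × ℝ × ℝ) = e2 + (d2_2 f x y) • e3 by simp [e2, e3],
    map_add, map_smul]
  simp [smul_eq_mul]; ring

lemma dq {P Φ : ℝ × ℝ × ℝ → ℝ} (hP : ContDiff ℝ (⊤ : ℕ∞) P) (hΦ : ContDiff ℝ (⊤ : ℕ∞) Φ)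
    (e j u : ℝ × ℝ × ℝ) :
    fderiv ℝ (fun x => fderiv ℝ P x e + fderiv ℝ P x e3 * Φ x) u j
      = fderiv ℝ (fderiv ℝ P) u j e + fderiv ℝ (fderiv ℝ P) u j e3 * Φ u
        + fderiv ℝ P u e3 * fderiv ℝ Φ u j := by
  have h1 : DifferentiableAt ℝ (fun x => fderiv ℝ P x e) u := diff3 (contDiff_Q hP e) u
  have h3 : DifferentiableAt ℝ (fun x => fderiv ℝ P x e3) u := diff3 (contDiff_Q hP e3) u
  have hφ' : DifferentiableAt ℝ Φ u := diff3 hΦ u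
  rw [fderiv_fun_add (g := fun x => fderiv ℝ P x e3 * Φ x) h1 (h3.mul hφ'), ContinuousLinearMap.add_apply, fderiv_fun_mul h3 hφ',
    ContinuousLinearMap.add_apply, ContinuousLinearMap.smul_apply,
    ContinuousLinearMap.smul_apply, fderiv_Q hP e j u, fderiv_Q hP e3 j u]
  simp [smul_eq_mul]; ring

end PRaux

open PRaux

/-- the pressure-term rearrangement with q = ∂_i p + (∂₃p) φ, where φ is any smooth
extension of ∂_i f. -/
theorem pressure_rearrangement
    (p φ : ℝ → ℝ → ℝ → ℝ) (f : ℝ → ℝ → ℝ) (i : Fin 2)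
    (hp : smooth3 p) (hφ : smooth3 φ) (hf : smooth2 f)
    (hext : ∀ x y, φ x y (f x y) = dtg2 i f x y) :
    ∀ x y,
      -(dtg2 i (tr2 (d3_3 p) f) x y)
        + ∑ j : Fin 2, dtg2 i (tr2 (dsp3 j.castSucc p) f) x y * dtg2 j f x y
      = -(∑ k : Fin 3,
            Nf2 f k x y
              * dsp3 k (fun a b c => dsp3 i.castSucc p a b c + d3_3 p a b c * φ a b c)
                  x y (f x y))
        + d3_3 p x y (f x y) * (∑ k : Fin 3, Nf2 f k x y * dsp3 k φ x y (f x y)) := by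
  have hp' : ContDiff ℝ (⊤ : ℕ∞) (U3 p) := hp
  have hφ' : ContDiff ℝ (⊤ : ℕ∞) (U3 φ) := hφ
  have hQ1 : d1_3 p = fun a b c => fderiv ℝ (U3 p) (a, b, c) e1 :=
    funext fun a => funext fun b => funext fun c => d1_3_eq hp a b c
  have hQ2 : d2_3 p = fun a b c => fderiv ℝ (U3 p) (a, b, c) e2 :=
    funext fun a => funext fun b => funext fun c => d2_3_eq hp a b c
  have hQ3 : d3_3 p = fun a b c => fderiv ℝ (U3 p) (a, b, c) e3 :=
    funext fun a => funext fun b => funext fun c => d3_3_eq hp a b c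
  have hs : ∀ e, smooth3 (fun a b c => fderiv ℝ (U3 p) (a, b, c) e) := fun e => contDiff_Q hp' e
  fin_cases i
  · intro x y
    have hval : U3 φ (x, y, f x y) = d1_2 f x y := by
      have := hext x y; simpa [dtg2, U3] using this
    have hsq : smooth3 (fun a b c =>
        fderiv ℝ (U3 p) (a, b, c) e1 + fderiv ℝ (U3 p) (a, b, c) e3 * φ a b c) :=
      (contDiff_Q hp' e1).add ((contDiff_Q hp' e3).mul hφ')
    simp only [Fin.mk_zero, Fin.mk_one, dtg2, dsp3, Nf2, Fin.sum_univ_two, Fin.sum_univ_three, Fin.isValue,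
      Matrix.cons_val_zero, Matrix.cons_val_one, Matrix.head_cons, Fin.castSucc_zero,
      Fin.castSucc_one, Matrix.cons_val_two, Matrix.tail_cons]
    simp only [hQ1, hQ2, hQ3]
    rw [tr2_d1 (hs e3) hf x y, tr2_d1 (hs e1) hf x y, tr2_d1 (hs e2) hf x y]
    have hq1 : d1_3 (fun a b c =>
        fderiv ℝ (U3 p) (a, b, c) e1 + fderiv ℝ (U3 p) (a, b, c) e3 * φ a b c) x y (f x y)
        = fderiv ℝ (fun u => fderiv ℝ (U3 p) u e1 + fderiv ℝ (U3 p) u e3 * U3 φ u)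
            (x, y, f x y) e1 := d1_3_eq hsq x y (f x y)
    have hq2 : d2_3 (fun a b c =>
        fderiv ℝ (U3 p) (a, b, c) e1 + fderiv ℝ (U3 p) (a, b, c) e3 * φ a b c) x y (f x y)
        = fderiv ℝ (fun u => fderiv ℝ (U3 p) u e1 + fderiv ℝ (U3 p) u e3 * U3 φ u)
            (x, y, f x y) e2 := d2_3_eq hsq x y (f x y)
    have hq3 : d3_3 (fun a b c =>
        fderiv ℝ (U3 p) (a, b, c) e1 + fderiv ℝ (U3 p) (a, b, c) e3 * φ a b c) x y (f x y)
        = fderiv ℝ (fun u => fderiv ℝ (U3 p) u e1 + fderiv ℝ (U3 p) u e3 * U3 φ u)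
            (x, y, f x y) e3 := d3_3_eq hsq x y (f x y)
    rw [hq1, hq2, hq3, dq hp' hφ' e1 e1 _, dq hp' hφ' e1 e2 _, dq hp' hφ' e1 e3 _]
    have hφ1 : d1_3 φ x y (f x y) = fderiv ℝ (U3 φ) (x, y, f x y) e1 := d1_3_eq hφ x y (f x y)
    have hφ2 : d2_3 φ x y (f x y) = fderiv ℝ (U3 φ) (x, y, f x y) e2 := d2_3_eq hφ x y (f x y)
    have hφ3 : d3_3 φ x y (f x y) = fderiv ℝ (U3 φ) (x, y, f x y) e3 := d3_3_eq hφ x y (f x y)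
    rw [hφ1, hφ2, hφ3, hval]
    simp only [show ∀ e, U3 (fun a b c => fderiv ℝ (U3 p) (a, b, c) e)
        = fun u => fderiv ℝ (U3 p) u e from fun e => rfl]
    simp only [fderiv_Q hp']
    simp only [second_symm hp' (x, y, f x y) e1 e2, second_symm hp' (x, y, f x y) e1 e3,
      second_symm hp' (x, y, f x y) e2 e3]
    ring
  · intro x y
    have hval : U3 φ (x, y, f x y) = d2_2 f x y := by
      have := hext x y; simpa [dtg2, U3] using this
    have hsq : smooth3 (fun a b c =>
        fderiv ℝ (U3 p) (a, b, c) e2 + fderiv ℝ (U3 p) (a, b, c) e3 * φ a b c) :=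
      (contDiff_Q hp' e2).add ((contDiff_Q hp' e3).mul hφ')
    simp only [Fin.mk_zero, Fin.mk_one, dtg2, dsp3, Nf2, Fin.sum_univ_two, Fin.sum_univ_three, Fin.isValue,
      Matrix.cons_val_zero, Matrix.cons_val_one, Matrix.head_cons, Fin.castSucc_zero,
      Fin.castSucc_one, Matrix.cons_val_two, Matrix.tail_cons]
    simp only [hQ1, hQ2, hQ3]
    rw [tr2_d2 (hs e3) hf x y, tr2_d2 (hs e1) hf x y, tr2_d2 (hs e2) hf x y]
    have hq1 : d1_3 (fun a b c =>
        fderiv ℝ (U3 p) (a, b, c) e2 + fderiv ℝ (U3 p) (a, b, c) e3 * φ a b c) x y (f x y)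
        = fderiv ℝ (fun u => fderiv ℝ (U3 p) u e2 + fderiv ℝ (U3 p) u e3 * U3 φ u)
            (x, y, f x y) e1 := d1_3_eq hsq x y (f x y)
    have hq2 : d2_3 (fun a b c =>
        fderiv ℝ (U3 p) (a, b, c) e2 + fderiv ℝ (U3 p) (a, b, c) e3 * φ a b c) x y (f x y)
        = fderiv ℝ (fun u => fderiv ℝ (U3 p) u e2 + fderiv ℝ (U3 p) u e3 * U3 φ u)
            (x, y, f x y) e2 := d2_3_eq hsq x y (f x y)
    have hq3 : d3_3 (fun a b c =>
        fderiv ℝ (U3 p) (a, b, c) e2 + fderiv ℝ (U3 p) (a, b, c) e3 * φ a b c) x y (f x y)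
        = fderiv ℝ (fun u => fderiv ℝ (U3 p) u e2 + fderiv ℝ (U3 p) u e3 * U3 φ u)
            (x, y, f x y) e3 := d3_3_eq hsq x y (f x y)
    rw [hq1, hq2, hq3, dq hp' hφ' e2 e1 _, dq hp' hφ' e2 e2 _, dq hp' hφ' e2 e3 _]
    have hφ1 : d1_3 φ x y (f x y) = fderiv ℝ (U3 φ) (x, y, f x y) e1 := d1_3_eq hφ x y (f x y)
    have hφ2 : d2_3 φ x y (f x y) = fderiv ℝ (U3 φ) (x, y, f x y) e2 := d2_3_eq hφ x y (f x y)
    have hφ3 : d3_3 φ x y (f x y) = fderiv ℝ (U3 φ) (x, y, f x y) e3 := d3_3_eq hφ x y (f x y)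
    rw [hφ1, hφ2, hφ3, hval]
    simp only [show ∀ e, U3 (fun a b c => fderiv ℝ (U3 p) (a, b, c) e)
        = fun u => fderiv ℝ (U3 p) u e from fun e => rfl]
    simp only [fderiv_Q hp']
    simp only [second_symm hp' (x, y, f x y) e1 e2, second_symm hp' (x, y, f x y) e1 e3,
      second_symm hp' (x, y, f x y) e2 e3]
    ring
end
end

section
/- Let u : ℝ × ℝ³ → ℝ³ and G : ℝ × ℝ³ → ℝ³ be smooth. Assume u is divergence free, Σ_{m=1}^{3} ∂_m u_m = 0 on ℝ × ℝ³, and that G satisfies the deformation transport equation ∂_t G_i + Σ_{m=1}^{3} u_m ∂_m G_i = Σ_{m=1}^{3} G_m ∂_m u_i on ℝ × ℝ³ for i = 1,2,3. Then the divergence d = Σ_{i=1}^{3} ∂_i G_i satisfies the pure transport equation ∂_t d + Σ_{m=1}^{3} u_m ∂_m d = 0 on ℝ × ℝ³. -/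
open scoped BigOperators

noncomputable section

/-! Differentiating the transport equation of `Gᵢ` along `eᵢ` and summing over `i` gives, once
second derivatives are commuted and with `D_t = ∂_t + u·∇`,
`D_t (div G) = ∑ᵢ ∑ₘ (∂ᵢGₘ ∂ₘuᵢ - ∂ᵢuₘ ∂ₘGᵢ) + ∑ₘ Gₘ ∂ₘ (div u)`.
The double sum cancels on exchanging `i` and `m`, and the last term vanishes since `div u = 0`. -/

open Finset

section DirDeriv

variable {E : Type*} [NormedAddCommGroup E] [NormedSpace ℝ E]

def dirDeriv (v : E) (φ : E → ℝ) : E → ℝ := fun p => fderiv ℝ φ p v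

variable {v w : E} {φ ψ : E → ℝ}

lemma dirDeriv_zero : dirDeriv v (0 : E → ℝ) = 0 := by
  ext p
  simp [dirDeriv]

lemma dirDeriv_add (hφ : Differentiable ℝ φ) (hψ : Differentiable ℝ ψ) :
    dirDeriv v (φ + ψ) = dirDeriv v φ + dirDeriv v ψ := by
  ext p
  simp [dirDeriv, fderiv_add (hφ p) (hψ p)]

lemma dirDeriv_mul (hφ : Differentiable ℝ φ) (hψ : Differentiable ℝ ψ) :
    dirDeriv v (φ * ψ) = φ * dirDeriv v ψ + ψ * dirDeriv v φ := by
  ext p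
  simp [dirDeriv, fderiv_mul (hφ p) (hψ p)]

lemma dirDeriv_sum {ι : Type*} (s : Finset ι) {φ : ι → E → ℝ}
    (hφ : ∀ i ∈ s, Differentiable ℝ (φ i)) :
    dirDeriv v (∑ i ∈ s, φ i) = ∑ i ∈ s, dirDeriv v (φ i) := by
  ext p
  simp [dirDeriv, fderiv_sum fun i hi => hφ i hi p]

lemma ContDiff.dirDeriv {n : WithTop ℕ∞} (hφ : ContDiff ℝ (n + 1) φ) :
    ContDiff ℝ n (dirDeriv v φ) :=
  (hφ.fderiv_right le_rfl).clm_apply contDiff_const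

lemma dirDeriv_dirDeriv (hφ : ContDiff ℝ 2 φ) (p : E) :
    dirDeriv v (dirDeriv w φ) p = fderiv ℝ (fderiv ℝ φ) p v w := by
  have h : Differentiable ℝ (fderiv ℝ φ) :=
    (hφ.fderiv_right (m := 1) le_rfl).differentiable one_ne_zero
  change fderiv ℝ (fun q => fderiv ℝ φ q w) p v = _
  simp [fderiv_clm_apply (h p) (differentiableAt_const w)]

lemma dirDeriv_comm (hφ : ContDiff ℝ 2 φ) :
    dirDeriv v (dirDeriv w φ) = dirDeriv w (dirDeriv v φ) := by
  ext p
  rw [dirDeriv_dirDeriv hφ, dirDeriv_dirDeriv hφ]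
  exact hφ.contDiffAt.isSymmSndFDerivAt (by simp) v w

lemma deriv_comp_eq_dirDeriv {c : ℝ → E} {s : ℝ} (hc : HasDerivAt c v s)
    (hφ : DifferentiableAt ℝ φ (c s)) : deriv (φ ∘ c) s = dirDeriv v φ (c s) :=
  (hφ.hasFDerivAt.comp_hasDerivAt s hc).deriv

end DirDeriv

section Transport

variable {E : Type*} [NormedAddCommGroup E] [NormedSpace ℝ E] {ι : Type*} [Fintype ι]

lemma dirDeriv_divergence (v : E) (e : ι → E) {φ : ι → E → ℝ}
    (hφ : ∀ i, ContDiff ℝ 2 (φ i)) :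
    dirDeriv v (∑ i, dirDeriv (e i) (φ i)) = ∑ i, dirDeriv (e i) (dirDeriv v (φ i)) := by
  rw [dirDeriv_sum _ fun i _ => ((hφ i).dirDeriv (n := 1)).differentiable one_ne_zero]
  exact sum_congr rfl fun i _ => dirDeriv_comm (hφ i)

theorem dirDeriv_divergence_add_transport_eq_zero (e₀ : E) (e : ι → E) {u G : ι → E → ℝ}
    (hu : ∀ i, ContDiff ℝ 2 (u i)) (hG : ∀ i, ContDiff ℝ 2 (G i))
    (hdiv : ∑ m, dirDeriv (e m) (u m) = 0)
    (htrans : ∀ i, dirDeriv e₀ (G i) + ∑ m, u m * dirDeriv (e m) (G i)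
      = ∑ m, G m * dirDeriv (e m) (u i)) :
    dirDeriv e₀ (∑ i, dirDeriv (e i) (G i))
      + ∑ m, u m * dirDeriv (e m) (∑ i, dirDeriv (e i) (G i)) = 0 := by
  have hu_diff (i : ι) : Differentiable ℝ (u i) := (hu i).differentiable two_ne_zero
  have hG_diff (i : ι) : Differentiable ℝ (G i) := (hG i).differentiable two_ne_zero
  have hdu_diff (i : ι) (v : E) : Differentiable ℝ (dirDeriv v (u i)) :=
    ((hu i).dirDeriv (n := 1)).differentiable one_ne_zero
  have hdG_diff (i : ι) (v : E) : Differentiable ℝ (dirDeriv v (G i)) :=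
    ((hG i).dirDeriv (n := 1)).differentiable one_ne_zero
  have htrans_deriv (i : ι) : dirDeriv (e i) (dirDeriv e₀ (G i))
      + ∑ m, u m * dirDeriv (e i) (dirDeriv (e m) (G i))
      + ∑ m, dirDeriv (e m) (G i) * dirDeriv (e i) (u m)
      = ∑ m, G m * dirDeriv (e i) (dirDeriv (e m) (u i))
      + ∑ m, dirDeriv (e m) (u i) * dirDeriv (e i) (G m) := by
    have h := congrArg (dirDeriv (e i)) (htrans i)
    rwa [dirDeriv_add (hdG_diff i e₀) (Differentiable.sum fun m _ => (hu_diff m).mul (hdG_diff i (e m))),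
      dirDeriv_sum _ fun m _ => (hu_diff m).mul (hdG_diff i (e m)),
      dirDeriv_sum _ fun m _ => (hG_diff m).mul (hdu_diff i (e m)),
      sum_congr rfl fun m _ => dirDeriv_mul (hu_diff m) (hdG_diff i (e m)),
      sum_congr rfl fun m _ => dirDeriv_mul (hG_diff m) (hdu_diff i (e m)),
      sum_add_distrib, sum_add_distrib, ← add_assoc] at h
  calc _ = ∑ i, (dirDeriv (e i) (dirDeriv e₀ (G i))
          + ∑ m, u m * dirDeriv (e i) (dirDeriv (e m) (G i))) := by
        simp only [dirDeriv_divergence _ e hG, sum_add_distrib, mul_sum]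
        rw [sum_comm]
    _ = ∑ i, (∑ m, G m * dirDeriv (e i) (dirDeriv (e m) (u i))
          + ∑ m, dirDeriv (e m) (u i) * dirDeriv (e i) (G m)
          - ∑ m, dirDeriv (e m) (G i) * dirDeriv (e i) (u m)) :=
        sum_congr rfl fun i _ => eq_sub_of_add_eq (htrans_deriv i)
    _ = ∑ m, G m * dirDeriv (e m) (∑ i, dirDeriv (e i) (u i))
          + (∑ i, ∑ m, dirDeriv (e m) (u i) * dirDeriv (e i) (G m)
            - ∑ i, ∑ m, dirDeriv (e m) (G i) * dirDeriv (e i) (u m)) := by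
        simp only [dirDeriv_divergence _ e hu, sum_add_distrib, sum_sub_distrib, mul_sum,
          add_sub_assoc]
        rw [sum_comm (f := fun i m => G m * _)]
    _ = 0 := by
        simp only [hdiv, dirDeriv_zero, mul_zero, sum_const_zero, zero_add, sub_eq_zero]
        exact sum_comm.trans (sum_congr rfl fun _ _ => sum_congr rfl fun _ _ => mul_comm _ _)

end Transport

section Coordinates

def uncurry4 (g : ℝ → ℝ → ℝ → ℝ → ℝ) : ℝ × ℝ × ℝ × ℝ → ℝ :=
  fun p => g p.1 p.2.1 p.2.2.1 p.2.2.2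

def spaceDir : Fin 3 → ℝ × ℝ × ℝ × ℝ := ![(0, 1, 0, 0), (0, 0, 1, 0), (0, 0, 0, 1)]

variable {g : ℝ → ℝ → ℝ → ℝ → ℝ}

lemma smooth4.contDiff_uncurry4 {n : ℕ} (hg : smooth4 g) : ContDiff ℝ n (uncurry4 g) :=
  hg.of_le (by exact_mod_cast le_top)

lemma d1_4_eq_dirDeriv (hg : Differentiable ℝ (uncurry4 g)) (t x y z : ℝ) :
    d1_4 g t x y z = dirDeriv (1, 0, 0, 0) (uncurry4 g) (t, x, y, z) :=
  deriv_comp_eq_dirDeriv ((hasDerivAt_id t).prodMk (hasDerivAt_const t (x, y, z))) (hg _)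

lemma dsp_eq_dirDeriv (hg : Differentiable ℝ (uncurry4 g)) (m : Fin 3) (t x y z : ℝ) :
    dsp m g t x y z = dirDeriv (spaceDir m) (uncurry4 g) (t, x, y, z) := by
  fin_cases m
  · exact deriv_comp_eq_dirDeriv ((hasDerivAt_const x t).prodMk
      ((hasDerivAt_id x).prodMk (hasDerivAt_const x (y, z)))) (hg _)
  · exact deriv_comp_eq_dirDeriv ((hasDerivAt_const y t).prodMk ((hasDerivAt_const y x).prodMk
      ((hasDerivAt_id y).prodMk (hasDerivAt_const y z)))) (hg _)
  · exact deriv_comp_eq_dirDeriv ((hasDerivAt_const z t).prodMk ((hasDerivAt_const z x).prodMk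
      ((hasDerivAt_const z y).prodMk (hasDerivAt_id z)))) (hg _)

end Coordinates

/-- the divergence of a transported deformation column satisfies a pure transport
equation. -/
theorem divergence_transported
    (u G : Fin 3 → ℝ → ℝ → ℝ → ℝ → ℝ)
    (hu : ∀ i, smooth4 (u i)) (hG : ∀ i, smooth4 (G i))
    (hdiv : ∀ t x y z, (∑ m : Fin 3, dsp m (u m) t x y z) = 0)
    (htrans : ∀ i : Fin 3, ∀ t x y z,
      d1_4 (G i) t x y z + ∑ m : Fin 3, u m t x y z * dsp m (G i) t x y z
        = ∑ m : Fin 3, G m t x y z * dsp m (u i) t x y z) :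
    ∀ t x y z,
      d1_4 (fun a b c e => ∑ i : Fin 3, dsp i (G i) a b c e) t x y z
        + ∑ m : Fin 3,
            u m t x y z * dsp m (fun a b c e => ∑ i : Fin 3, dsp i (G i) a b c e) t x y z
        = 0 := by
  have hu₂ (i : Fin 3) : ContDiff ℝ 2 (uncurry4 (u i)) := (hu i).contDiff_uncurry4
  have hG₂ (i : Fin 3) : ContDiff ℝ 2 (uncurry4 (G i)) := (hG i).contDiff_uncurry4
  have hu₁ (i : Fin 3) : Differentiable ℝ (uncurry4 (u i)) := (hu₂ i).differentiable two_ne_zero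
  have hG₁ (i : Fin 3) : Differentiable ℝ (uncurry4 (G i)) := (hG₂ i).differentiable two_ne_zero
  have hdivG : uncurry4 (fun a b c e => ∑ i : Fin 3, dsp i (G i) a b c e)
      = ∑ i, dirDeriv (spaceDir i) (uncurry4 (G i)) := by
    ext ⟨t, x, y, z⟩
    simp [uncurry4, dsp_eq_dirDeriv (hG₁ _)]
  have hdivU : ∑ m, dirDeriv (spaceDir m) (uncurry4 (u m)) = 0 := by
    ext ⟨t, x, y, z⟩
    simpa [uncurry4, dsp_eq_dirDeriv (hu₁ _)] using hdiv t x y z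
  have htransG (i : Fin 3) : dirDeriv (1, 0, 0, 0) (uncurry4 (G i))
      + ∑ m, uncurry4 (u m) * dirDeriv (spaceDir m) (uncurry4 (G i))
      = ∑ m, uncurry4 (G m) * dirDeriv (spaceDir m) (uncurry4 (u i)) := by
    ext ⟨t, x, y, z⟩
    simpa [uncurry4, d1_4_eq_dirDeriv (hG₁ _), dsp_eq_dirDeriv (hu₁ _), dsp_eq_dirDeriv (hG₁ _)]
      using htrans i t x y z
  have key := dirDeriv_divergence_add_transport_eq_zero _ _ hu₂ hG₂ hdivU htransG
  intro t x y z
  have hdivG₁ : Differentiable ℝ (uncurry4 (fun a b c e => ∑ i : Fin 3, dsp i (G i) a b c e)) :=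
    hdivG ▸ Differentiable.sum fun i _ => ((hG₂ i).dirDeriv (n := 1)).differentiable one_ne_zero
  rw [d1_4_eq_dirDeriv hdivG₁]
  simp only [dsp_eq_dirDeriv hdivG₁, hdivG]
  simpa [uncurry4] using congrFun key (t, x, y, z)
end
end

section
/- Let f : ℝ × ℝ² → ℝ and u : ℝ × ℝ³ → ℝ³ be smooth and satisfy the kinematic boundary condition u̲·N_f = ∂_t f on ℝ × ℝ². Set τ₁ = (1, 0, ∂₁f), τ₂ = (0, 1, ∂₂f), and for i = 1,2 write ∂_i u̲ · N_f := Σ_{k=1}^{3} ∂_i(u̲_k) N_{f,k}. Then, applying D_t = ∂_t + u̲₁∂₁ + u̲₂∂₂ componentwise to N_f, one has at every (t,x'): D_t N_f = [ ( −∂₁u̲·N_f − (∂₂f)² ∂₁u̲·N_f + ∂₁f ∂₂f ∂₂u̲·N_f ) / (1+(∂₁f)²+(∂₂f)²) ] τ₁ + [ ( −∂₂u̲·N_f − (∂₁f)² ∂₂u̲·N_f + ∂₁f ∂₂f ∂₁u̲·N_f ) / (1+(∂₁f)²+(∂₂f)²) ] τ₂ + [ ( ∂₁f ∂₁u̲·N_f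 + ∂₂f ∂₂u̲·N_f ) / (1+(∂₁f)²+(∂₂f)²) ] N_f. -/
open scoped BigOperators

noncomputable section

/-- the tangent vectors τ₁ = (1,0,∂₁f) and τ₂ = (0,1,∂₂f) to the graph of f(t,·) -/
def tau (f : ℝ → ℝ → ℝ → ℝ) : Fin 2 → Fin 3 → ℝ → ℝ → ℝ → ℝ :=
  ![![fun _ _ _ => 1, fun _ _ _ => 0, d2_3 f],
    ![fun _ _ _ => 0, fun _ _ _ => 1, d3_3 f]]

/-- ∂_i u̲ · N_f = Σ_k ∂_i(u̲_k) N_{f,k} -/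
def duN (u : Fin 3 → ℝ → ℝ → ℝ → ℝ → ℝ) (f : ℝ → ℝ → ℝ → ℝ) (i : Fin 2) : ℝ → ℝ → ℝ → ℝ :=
  fun t x y => ∑ k : Fin 3, dtg i (tr (u k) f) t x y * Nf f k t x y

namespace MDN

lemma le1T : (1 : WithTop ℕ∞) ≤ ((⊤:ℕ∞) : WithTop ℕ∞) := by
  exact_mod_cast (le_top : (1:ℕ∞) ≤ ⊤)
lemma leT1 : ((⊤:ℕ∞) : WithTop ℕ∞) + 1 ≤ ((⊤:ℕ∞) : WithTop ℕ∞) := by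
  exact_mod_cast (le_top : (⊤:ℕ∞) + 1 ≤ ⊤)
lemma le2T : (2 : WithTop ℕ∞) ≤ ((⊤:ℕ∞) : WithTop ℕ∞) := by
  have : ((2:ℕ∞) : WithTop ℕ∞) ≤ ((⊤:ℕ∞) : WithTop ℕ∞) := by
    exact_mod_cast (le_top : (2:ℕ∞) ≤ ⊤)
  simpa using this

abbrev unc3 (g : ℝ → ℝ → ℝ → ℝ) : ℝ × ℝ × ℝ → ℝ := fun p => g p.1 p.2.1 p.2.2

variable {F : Type*} [NormedAddCommGroup F] [NormedSpace ℝ F]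
variable {g : ℝ → ℝ → ℝ → ℝ} {t x y : ℝ}

lemma hasDerivAt_sec1 (G : ℝ×ℝ×ℝ → F) (hG : DifferentiableAt ℝ G (t,x,y)) :
    HasDerivAt (fun s => G (s,x,y)) (fderiv ℝ G (t,x,y) (1,0,0)) t := by
  have h : HasDerivAt (fun s : ℝ => ((s,x,y) : ℝ×ℝ×ℝ)) (((1:ℝ),(0:ℝ),(0:ℝ)) : ℝ×ℝ×ℝ) t :=
    (hasDerivAt_id t).prodMk ((hasDerivAt_const t x).prodMk (hasDerivAt_const t y))
  exact hG.hasFDerivAt.comp_hasDerivAt t h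

lemma hasDerivAt_sec2 (G : ℝ×ℝ×ℝ → F) (hG : DifferentiableAt ℝ G (t,x,y)) :
    HasDerivAt (fun s => G (t,s,y)) (fderiv ℝ G (t,x,y) (0,1,0)) x := by
  have h : HasDerivAt (fun s : ℝ => ((t,s,y) : ℝ×ℝ×ℝ)) (((0:ℝ),(1:ℝ),(0:ℝ)) : ℝ×ℝ×ℝ) x :=
    (hasDerivAt_const x t).prodMk ((hasDerivAt_id x).prodMk (hasDerivAt_const x y))
  exact hG.hasFDerivAt.comp_hasDerivAt x h

lemma hasDerivAt_sec3 (G : ℝ×ℝ×ℝ → F) (hG : DifferentiableAt ℝ G (t,x,y)) :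
    HasDerivAt (fun s => G (t,x,s)) (fderiv ℝ G (t,x,y) (0,0,1)) y := by
  have h : HasDerivAt (fun s : ℝ => ((t,x,s) : ℝ×ℝ×ℝ)) (((0:ℝ),(0:ℝ),(1:ℝ)) : ℝ×ℝ×ℝ) y :=
    (hasDerivAt_const y t).prodMk ((hasDerivAt_const y x).prodMk (hasDerivAt_id y))
  exact hG.hasFDerivAt.comp_hasDerivAt y h

lemma diffU (hg : smooth3 g) : Differentiable ℝ (unc3 g) := hg.differentiable (by simp)

lemma d1_3_eq (hg : smooth3 g) : d1_3 g t x y = fderiv ℝ (unc3 g) (t,x,y) (1,0,0) :=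
  (hasDerivAt_sec1 (unc3 g) ((diffU hg) (t,x,y))).deriv
lemma d2_3_eq (hg : smooth3 g) : d2_3 g t x y = fderiv ℝ (unc3 g) (t,x,y) (0,1,0) :=
  (hasDerivAt_sec2 (unc3 g) ((diffU hg) (t,x,y))).deriv
lemma d3_3_eq (hg : smooth3 g) : d3_3 g t x y = fderiv ℝ (unc3 g) (t,x,y) (0,0,1) :=
  (hasDerivAt_sec3 (unc3 g) ((diffU hg) (t,x,y))).deriv

lemma hasDerivAt_d1 (hg : smooth3 g) : HasDerivAt (fun s => g s x y) (d1_3 g t x y) t :=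
  (hasDerivAt_sec1 (unc3 g) ((diffU hg) (t,x,y))).differentiableAt.hasDerivAt
lemma hasDerivAt_d2 (hg : smooth3 g) : HasDerivAt (fun s => g t s y) (d2_3 g t x y) x :=
  (hasDerivAt_sec2 (unc3 g) ((diffU hg) (t,x,y))).differentiableAt.hasDerivAt
lemma hasDerivAt_d3 (hg : smooth3 g) : HasDerivAt (fun s => g t x s) (d3_3 g t x y) y :=
  (hasDerivAt_sec3 (unc3 g) ((diffU hg) (t,x,y))).differentiableAt.hasDerivAt

lemma fderiv_smooth (hg : smooth3 g) :
    ContDiff ℝ ((⊤:ℕ∞) : WithTop ℕ∞) (fderiv ℝ (unc3 g)) := hg.fderiv_right leT1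

lemma hasDerivAt_fderiv_sec1 (hg : smooth3 g) (v : ℝ×ℝ×ℝ) :
    HasDerivAt (fun s => fderiv ℝ (unc3 g) (s,x,y) v)
      (fderiv ℝ (fderiv ℝ (unc3 g)) (t,x,y) (1,0,0) v) t := by
  have h := hasDerivAt_sec1 (fderiv ℝ (unc3 g))
    (((fderiv_smooth hg).differentiable (by simp)) (t,x,y))
  exact (ContinuousLinearMap.apply ℝ ℝ v).hasFDerivAt.comp_hasDerivAt t h

lemma hasDerivAt_fderiv_sec2 (hg : smooth3 g) (v : ℝ×ℝ×ℝ) :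
    HasDerivAt (fun s => fderiv ℝ (unc3 g) (t,s,y) v)
      (fderiv ℝ (fderiv ℝ (unc3 g)) (t,x,y) (0,1,0) v) x := by
  have h := hasDerivAt_sec2 (fderiv ℝ (unc3 g))
    (((fderiv_smooth hg).differentiable (by simp)) (t,x,y))
  exact (ContinuousLinearMap.apply ℝ ℝ v).hasFDerivAt.comp_hasDerivAt x h

lemma hasDerivAt_fderiv_sec3 (hg : smooth3 g) (v : ℝ×ℝ×ℝ) :
    HasDerivAt (fun s => fderiv ℝ (unc3 g) (t,x,s) v)
      (fderiv ℝ (fderiv ℝ (unc3 g)) (t,x,y) (0,0,1) v) y := by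
  have h := hasDerivAt_sec3 (fderiv ℝ (unc3 g))
    (((fderiv_smooth hg).differentiable (by simp)) (t,x,y))
  exact (ContinuousLinearMap.apply ℝ ℝ v).hasFDerivAt.comp_hasDerivAt y h

lemma d1_d2_eq (hg : smooth3 g) :
    d1_3 (d2_3 g) t x y = fderiv ℝ (fderiv ℝ (unc3 g)) (t,x,y) (1,0,0) (0,1,0) := by
  have hfun : (fun s => d2_3 g s x y) = fun s => fderiv ℝ (unc3 g) (s,x,y) (0,1,0) :=
    funext fun s => d2_3_eq hg
  show deriv (fun s => d2_3 g s x y) t = _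
  rw [hfun]; exact (hasDerivAt_fderiv_sec1 hg _).deriv

lemma d2_d1_eq (hg : smooth3 g) :
    d2_3 (d1_3 g) t x y = fderiv ℝ (fderiv ℝ (unc3 g)) (t,x,y) (0,1,0) (1,0,0) := by
  have hfun : (fun s => d1_3 g t s y) = fun s => fderiv ℝ (unc3 g) (t,s,y) (1,0,0) :=
    funext fun s => d1_3_eq hg
  show deriv (fun s => d1_3 g t s y) x = _
  rw [hfun]; exact (hasDerivAt_fderiv_sec2 hg _).deriv

lemma d1_d3_eq (hg : smooth3 g) :
    d1_3 (d3_3 g) t x y = fderiv ℝ (fderiv ℝ (unc3 g)) (t,x,y) (1,0,0) (0,0,1) := by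
  have hfun : (fun s => d3_3 g s x y) = fun s => fderiv ℝ (unc3 g) (s,x,y) (0,0,1) :=
    funext fun s => d3_3_eq hg
  show deriv (fun s => d3_3 g s x y) t = _
  rw [hfun]; exact (hasDerivAt_fderiv_sec1 hg _).deriv

lemma d3_d1_eq (hg : smooth3 g) :
    d3_3 (d1_3 g) t x y = fderiv ℝ (fderiv ℝ (unc3 g)) (t,x,y) (0,0,1) (1,0,0) := by
  have hfun : (fun s => d1_3 g t x s) = fun s => fderiv ℝ (unc3 g) (t,x,s) (1,0,0) :=
    funext fun s => d1_3_eq hg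
  show deriv (fun s => d1_3 g t x s) y = _
  rw [hfun]; exact (hasDerivAt_fderiv_sec3 hg _).deriv

lemma d2_d3_eq (hg : smooth3 g) :
    d2_3 (d3_3 g) t x y = fderiv ℝ (fderiv ℝ (unc3 g)) (t,x,y) (0,1,0) (0,0,1) := by
  have hfun : (fun s => d3_3 g t s y) = fun s => fderiv ℝ (unc3 g) (t,s,y) (0,0,1) :=
    funext fun s => d3_3_eq hg
  show deriv (fun s => d3_3 g t s y) x = _
  rw [hfun]; exact (hasDerivAt_fderiv_sec2 hg _).deriv

lemma d3_d2_eq (hg : smooth3 g) :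
    d3_3 (d2_3 g) t x y = fderiv ℝ (fderiv ℝ (unc3 g)) (t,x,y) (0,0,1) (0,1,0) := by
  have hfun : (fun s => d2_3 g t x s) = fun s => fderiv ℝ (unc3 g) (t,x,s) (0,1,0) :=
    funext fun s => d2_3_eq hg
  show deriv (fun s => d2_3 g t x s) y = _
  rw [hfun]; exact (hasDerivAt_fderiv_sec3 hg _).deriv

lemma sym (hg : smooth3 g) (v w : ℝ×ℝ×ℝ) :
    fderiv ℝ (fderiv ℝ (unc3 g)) (t,x,y) v w = fderiv ℝ (fderiv ℝ (unc3 g)) (t,x,y) w v :=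
  (hg.contDiffAt.isSymmSndFDerivAt (by rw [minSmoothness_of_isRCLikeNormedField]; exact le2T)) v w

lemma clairaut12 (hg : smooth3 g) : d1_3 (d2_3 g) t x y = d2_3 (d1_3 g) t x y := by
  rw [d1_d2_eq hg, d2_d1_eq hg]; exact sym hg _ _
lemma clairaut13 (hg : smooth3 g) : d1_3 (d3_3 g) t x y = d3_3 (d1_3 g) t x y := by
  rw [d1_d3_eq hg, d3_d1_eq hg]; exact sym hg _ _
lemma clairaut23 (hg : smooth3 g) : d2_3 (d3_3 g) t x y = d3_3 (d2_3 g) t x y := by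
  rw [d2_d3_eq hg, d3_d2_eq hg]; exact sym hg _ _

lemma smooth3_d2 (hg : smooth3 g) : smooth3 (d2_3 g) := by
  have h : (fun p : ℝ×ℝ×ℝ => d2_3 g p.1 p.2.1 p.2.2)
      = fun p => fderiv ℝ (unc3 g) p (0,1,0) := funext fun p => d2_3_eq hg
  rw [smooth3, h]
  exact (fderiv_smooth hg).clm_apply contDiff_const

lemma smooth3_d3 (hg : smooth3 g) : smooth3 (d3_3 g) := by
  have h : (fun p : ℝ×ℝ×ℝ => d3_3 g p.1 p.2.1 p.2.2)
      = fun p => fderiv ℝ (unc3 g) p (0,0,1) := funext fun p => d3_3_eq hg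
  rw [smooth3, h]
  exact (fderiv_smooth hg).clm_apply contDiff_const

lemma smooth3_neg (hg : smooth3 g) : smooth3 (fun a b c => -(g a b c)) := hg.neg

lemma smooth3_tr {v : ℝ → ℝ → ℝ → ℝ → ℝ} {f : ℝ → ℝ → ℝ → ℝ}
    (hv : smooth4 v) (hf : smooth3 f) : smooth3 (tr v f) := by
  have h : ContDiff ℝ (⊤:ℕ∞)
      (fun p : ℝ×ℝ×ℝ => ((p.1, p.2.1, p.2.2, f p.1 p.2.1 p.2.2) : ℝ×ℝ×ℝ×ℝ)) :=
    contDiff_fst.prodMk ((contDiff_fst.comp contDiff_snd).prodMk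
      ((contDiff_snd.comp contDiff_snd).prodMk hf))
  exact hv.comp h


lemma d1_3_neg (h : ℝ → ℝ → ℝ → ℝ) :
    d1_3 (fun a b c => -(h a b c)) = fun t x y => -(d1_3 h t x y) := by
  funext t x y; simp [d1_3, deriv.neg]
lemma d2_3_neg (h : ℝ → ℝ → ℝ → ℝ) :
    d2_3 (fun a b c => -(h a b c)) = fun t x y => -(d2_3 h t x y) := by
  funext t x y; simp [d2_3, deriv.neg]
lemma d3_3_neg (h : ℝ → ℝ → ℝ → ℝ) :
    d3_3 (fun a b c => -(h a b c)) = fun t x y => -(d3_3 h t x y) := by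
  funext t x y; simp [d3_3, deriv.neg]
lemma d2_3_one : d2_3 (fun _ _ _ => (1:ℝ)) = fun _ _ _ => 0 := by
  funext t x y; simp [d2_3]
lemma d3_3_one : d3_3 (fun _ _ _ => (1:ℝ)) = fun _ _ _ => 0 := by
  funext t x y; simp [d3_3]

section Keys

variable (f : ℝ → ℝ → ℝ → ℝ) (u : Fin 3 → ℝ → ℝ → ℝ → ℝ → ℝ)

lemma key0 (hf : smooth3 f) (hu : ∀ i, smooth4 (u i))
    (hkbc : ∀ t x y, (∑ k : Fin 3, tr (u k) f t x y * Nf f k t x y) = d1_3 f t x y)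
    (t x y : ℝ) : Dt u f (Nf f 0) t x y = -(duN u f 0 t x y) := by
  have hfx := smooth3_d2 hf
  have hfy := smooth3_d3 hf
  have htr : ∀ k : Fin 3, smooth3 (tr (u k) f) := fun k => smooth3_tr (hu k) hf
  have hNf0 : Nf f 0 = fun a b c => -(d2_3 f a b c) := rfl
  have hNf1 : Nf f 1 = fun a b c => -(d3_3 f a b c) := rfl
  have hNf2 : Nf f 2 = fun _ _ _ => (1:ℝ) := rfl
  have hN : ∀ k : Fin 3, smooth3 (Nf f k) := by
    intro k
    fin_cases k
    · exact hNf0 ▸ smooth3_neg hfx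
    · exact hNf1 ▸ smooth3_neg hfy
    · exact hNf2 ▸ contDiff_const
  have hS : HasDerivAt (fun s => d1_3 f t s y)
      (∑ k : Fin 3, (d2_3 (tr (u k) f) t x y * Nf f k t x y
        + tr (u k) f t x y * d2_3 (Nf f k) t x y)) x := by
    have hfun : (fun s => d1_3 f t s y)
        = fun s => ∑ k : Fin 3, tr (u k) f t s y * Nf f k t s y :=
      funext fun s => (hkbc t s y).symm
    rw [hfun]
    exact HasDerivAt.fun_sum fun k _ => (hasDerivAt_d2 (htr k)).mul (hasDerivAt_d2 (hN k))
  have e2 : d2_3 (d1_3 f) t x y = ∑ k : Fin 3, (d2_3 (tr (u k) f) t x y * Nf f k t x y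
        + tr (u k) f t x y * d2_3 (Nf f k) t x y) := hS.deriv
  rw [Fin.sum_univ_three] at e2
  simp only [hNf0, hNf1, hNf2, d2_3_neg, d2_3_one] at e2
  show d1_3 (Nf f 0) t x y + tr (u 0) f t x y * d2_3 (Nf f 0) t x y
      + tr (u 1) f t x y * d3_3 (Nf f 0) t x y = _
  simp only [duN, dtg, hNf0, hNf1, hNf2, Fin.sum_univ_three, d1_3_neg, d2_3_neg, d3_3_neg,
    Matrix.cons_val_zero, Matrix.cons_val_one, Matrix.head_cons]
  rw [clairaut12 hf, ← clairaut23 hf]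
  linear_combination -e2

lemma key1 (hf : smooth3 f) (hu : ∀ i, smooth4 (u i))
    (hkbc : ∀ t x y, (∑ k : Fin 3, tr (u k) f t x y * Nf f k t x y) = d1_3 f t x y)
    (t x y : ℝ) : Dt u f (Nf f 1) t x y = -(duN u f 1 t x y) := by
  have hfx := smooth3_d2 hf
  have hfy := smooth3_d3 hf
  have htr : ∀ k : Fin 3, smooth3 (tr (u k) f) := fun k => smooth3_tr (hu k) hf
  have hNf0 : Nf f 0 = fun a b c => -(d2_3 f a b c) := rfl
  have hNf1 : Nf f 1 = fun a b c => -(d3_3 f a b c) := rfl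
  have hNf2 : Nf f 2 = fun _ _ _ => (1:ℝ) := rfl
  have hN : ∀ k : Fin 3, smooth3 (Nf f k) := by
    intro k
    fin_cases k
    · exact hNf0 ▸ smooth3_neg hfx
    · exact hNf1 ▸ smooth3_neg hfy
    · exact hNf2 ▸ contDiff_const
  have hS : HasDerivAt (fun s => d1_3 f t x s)
      (∑ k : Fin 3, (d3_3 (tr (u k) f) t x y * Nf f k t x y
        + tr (u k) f t x y * d3_3 (Nf f k) t x y)) y := by
    have hfun : (fun s => d1_3 f t x s)
        = fun s => ∑ k : Fin 3, tr (u k) f t x s * Nf f k t x s :=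
      funext fun s => (hkbc t x s).symm
    rw [hfun]
    exact HasDerivAt.fun_sum fun k _ => (hasDerivAt_d3 (htr k)).mul (hasDerivAt_d3 (hN k))
  have e3 : d3_3 (d1_3 f) t x y = ∑ k : Fin 3, (d3_3 (tr (u k) f) t x y * Nf f k t x y
        + tr (u k) f t x y * d3_3 (Nf f k) t x y) := hS.deriv
  rw [Fin.sum_univ_three] at e3
  simp only [hNf0, hNf1, hNf2, d3_3_neg, d3_3_one] at e3
  show d1_3 (Nf f 1) t x y + tr (u 0) f t x y * d2_3 (Nf f 1) t x y
      + tr (u 1) f t x y * d3_3 (Nf f 1) t x y = _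
  simp only [duN, dtg, hNf0, hNf1, hNf2, Fin.sum_univ_three, d1_3_neg, d2_3_neg, d3_3_neg,
    Matrix.cons_val_zero, Matrix.cons_val_one, Matrix.head_cons]
  rw [clairaut13 hf, clairaut23 hf]
  linear_combination -e3

lemma key2 (t x y : ℝ) : Dt u f (Nf f 2) t x y = 0 := by
  have hNf2 : Nf f 2 = fun _ _ _ => (1:ℝ) := rfl
  simp [Dt, hNf2, d1_3, d2_3, d3_3]

end Keys

end MDN

/-- evolution formula for the normal vector (Lemma A.2). -/
theorem material_derivative_normal
    (f : ℝ → ℝ → ℝ → ℝ) (u : Fin 3 → ℝ → ℝ → ℝ → ℝ → ℝ)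
    (hf : smooth3 f) (hu : ∀ i, smooth4 (u i))
    (hkbc : ∀ t x y, (∑ k : Fin 3, tr (u k) f t x y * Nf f k t x y) = d1_3 f t x y) :
    ∀ m : Fin 3, ∀ t x y,
      Dt u f (Nf f m) t x y
        = ((-(duN u f 0 t x y) - (d3_3 f t x y)^2 * duN u f 0 t x y
              + d2_3 f t x y * d3_3 f t x y * duN u f 1 t x y)
            / (1 + (d2_3 f t x y)^2 + (d3_3 f t x y)^2)) * tau f 0 m t x y
          + ((-(duN u f 1 t x y) - (d2_3 f t x y)^2 * duN u f 1 t x y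
              + d2_3 f t x y * d3_3 f t x y * duN u f 0 t x y)
            / (1 + (d2_3 f t x y)^2 + (d3_3 f t x y)^2)) * tau f 1 m t x y
          + ((d2_3 f t x y * duN u f 0 t x y + d3_3 f t x y * duN u f 1 t x y)
            / (1 + (d2_3 f t x y)^2 + (d3_3 f t x y)^2)) * Nf f m t x y := by
  
  intro m t x y
  have h0 := MDN.key0 f u hf hu hkbc t x y
  have h1 := MDN.key1 f u hf hu hkbc t x y
  have h2 := MDN.key2 f u t x y
  have hD : (1 + (d2_3 f t x y)^2 + (d3_3 f t x y)^2) ≠ 0 := by positivity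
  fin_cases m <;> simp only [Fin.zero_eta, Fin.mk_one, Fin.reduceFinMk, Fin.isValue]
  · rw [h0]
    simp only [tau, Nf, Matrix.cons_val_zero, Matrix.cons_val_one, Matrix.head_cons]
    field_simp
    ring
  · rw [h1]
    simp only [tau, Nf, Matrix.cons_val_zero, Matrix.cons_val_one, Matrix.head_cons]
    field_simp
    ring
  · rw [h2]
    simp only [tau, Nf, Matrix.cons_val_zero, Matrix.cons_val_one, Matrix.head_cons,
      Matrix.cons_val_two, Matrix.tail_cons]
    field_simp
    ring
end
end
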